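/- arXiv:2206.14738 — 14 statements merged into one kernel-verified Lean document; each statement's English description precedes it below -/
import Mathlib

section
/- Let G = (V,E) be a finite simple graph and let {C_1,…,C_k} be a generalized k-community structure of G. Let i, j ∈ {1,…,k} with i ≠ j and let v ∈ V. If C_i ⊆ N[v] and C_j ⊄ N[v], then v ∉ C_j. -/
/-- The set of neighbours of `v` lying in `C`. -/
def nbrsIn {V : Type*} [DecidableEq V] (G : SimpleGraph V) [DecidableRel G.Adj]
    (C : Finset V) (v : V) : Finset V :=
  C.filter (fun w => G.Adj v w)

/-- The closed neighbourhood `N[v] = N(v) ∪ {v}` as a finset. -/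
def closedNbhd {V : Type*} [Fintype V] [DecidableEq V] (G : SimpleGraph V)
    [DecidableRel G.Adj] (v : V) : Finset V :=
  insert v (G.neighborFinset v)

/-- A generalized `k`-community structure of `G`: a partition of the vertex set into `k`
nonempty sets such that for all `i`, all `v ∈ C i` and all `j ≠ i`:
`|N_{C i}(v)| * |C j| ≥ |N_{C j}(v)| * (|C i| - 1)`. -/
def IsGenKComm {V : Type*} [Fintype V] [DecidableEq V] (G : SimpleGraph V) [DecidableRel G.Adj]
    {k : ℕ} (C : Fin k → Finset V) : Prop :=
  (∀ i, (C i).Nonempty) ∧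
  (∀ i j, i ≠ j → Disjoint (C i) (C j)) ∧
  (∀ v : V, ∃ i, v ∈ C i) ∧
  (∀ i j, i ≠ j → ∀ v ∈ C i,
    (nbrsIn G (C j) v).card * ((C i).card - 1) ≤ (nbrsIn G (C i) v).card * (C j).card)

/-- If `{C 1, …, C k}` is a generalized `k`-community structure of `G`, `i ≠ j`,
`C i ⊆ N[v]` and `C j ⊄ N[v]`, then `v ∉ C j`. -/
theorem stmt_1 {V : Type*} [Fintype V] [DecidableEq V] (G : SimpleGraph V) [DecidableRel G.Adj]
    {k : ℕ} (hk : 2 ≤ k) (C : Fin k → Finset V) (hcomm : IsGenKComm G C)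
    (i j : Fin k) (hij : i ≠ j) (v : V)
    (hi : C i ⊆ closedNbhd G v) (hj : ¬ C j ⊆ closedNbhd G v) :
    v ∉ C j := by
  intro hv
  obtain ⟨hne, hdisj, _, hineq⟩ := hcomm
  obtain ⟨w, hwj, hwn⟩ := Finset.not_subset.mp hj
  have hvw : v ≠ w := by rintro rfl; exact hwn (Finset.mem_insert_self _ _)
  have hvi : v ∉ C i := Finset.disjoint_left.mp (hdisj j i hij.symm) hv
  have h1 : nbrsIn G (C i) v = C i := by
    apply Finset.Subset.antisymm (Finset.filter_subset _ _)
    intro x hx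
    have hx' := hi hx
    rw [closedNbhd, Finset.mem_insert] at hx'
    rcases hx' with rfl | h
    · exact absurd hx hvi
    · exact Finset.mem_filter.mpr ⟨hx, (SimpleGraph.mem_neighborFinset _ _ _).mp h⟩
  have h2 : nbrsIn G (C j) v ⊆ (C j).erase v \ {w} := by
    intro x hx
    rw [nbrsIn, Finset.mem_filter] at hx
    refine Finset.mem_sdiff.mpr ⟨Finset.mem_erase.mpr ⟨fun h => G.irrefl (h ▸ hx.2), hx.1⟩, ?_⟩
    simp only [Finset.mem_singleton]
    rintro rfl
    exact hwn (Finset.mem_insert_of_mem ((SimpleGraph.mem_neighborFinset _ _ _).mpr hx.2))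
  have hw' : ({w} : Finset V) ⊆ (C j).erase v := by
    simp only [Finset.singleton_subset_iff]
    exact Finset.mem_erase.mpr ⟨hvw.symm, hwj⟩
  have hcard : (nbrsIn G (C j) v).card ≤ (C j).card - 2 := by
    calc (nbrsIn G (C j) v).card ≤ ((C j).erase v \ {w}).card := Finset.card_le_card h2
      _ = ((C j).erase v).card - 1 := by rw [Finset.card_sdiff_of_subset hw', Finset.card_singleton]
      _ = (C j).card - 1 - 1 := by rw [Finset.card_erase_of_mem hv]
      _ = (C j).card - 2 := by omega
  have key := hineq j i hij.symm v hv
  rw [h1] at key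
  have hci : 0 < (C i).card := (hne i).card_pos
  have hcj : 2 ≤ (C j).card := Finset.one_lt_card.mpr ⟨v, hv, w, hwj, hvw⟩
  have : (C i).card * ((C j).card - 1) ≤ (C i).card * ((C j).card - 2) := by
    calc (C i).card * ((C j).card - 1) ≤ (nbrsIn G (C j) v).card * (C i).card := key
      _ ≤ ((C j).card - 2) * (C i).card := Nat.mul_le_mul_right _ hcard
      _ = (C i).card * ((C j).card - 2) := Nat.mul_comm _ _
  have := Nat.le_of_mul_le_mul_left this hci
  omega
end

section
/- Let G = (V,E) be a finite simple graph and let {C_1,…,C_k} be a generalized k-community structure of G. If C_i = {u} for some index i and some vertex u ∈ V, then for every neighbour v of u, letting C_j be the part containing v (so j ≠ i), it holds that C_j ⊆ N[v]. -/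
/-- If `{C 1, …, C k}` is a generalized `k`-community structure of `G` with `C i = {u}`,
then for every neighbour `v` of `u`, the part `C j` containing `v` satisfies `C j ⊆ N[v]`. -/
theorem stmt_2 {V : Type*} [Fintype V] [DecidableEq V] (G : SimpleGraph V) [DecidableRel G.Adj]
    {k : ℕ} (hk : 2 ≤ k) (C : Fin k → Finset V) (hcomm : IsGenKComm G C)
    (i : Fin k) (u : V) (hu : C i = {u})
    (v : V) (huv : G.Adj u v) (j : Fin k) (hvj : v ∈ C j) :
    C j ⊆ closedNbhd G v := by
  obtain ⟨-, hdisj, -, hineq⟩ := hcomm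
  have hji : j ≠ i := by
    rintro rfl
    have : v ∈ ({u} : Finset V) := hu ▸ hvj
    exact G.ne_of_adj huv (Finset.mem_singleton.mp this).symm
  have key := hineq j i hji v hvj
  have hci : nbrsIn G (C i) v = {u} := by
    ext w
    simp only [nbrsIn, hu, Finset.mem_filter, Finset.mem_singleton]
    constructor
    · rintro ⟨rfl, -⟩; rfl
    · rintro rfl; exact ⟨rfl, huv.symm⟩
  rw [hci] at key
  simp only [hu, Finset.card_singleton, mul_one] at key
  -- key : (nbrsIn G (C i) v).card * ((C j).card - 1) ≤ (nbrsIn G (C j) v).card * (C i).card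
  -- i.e. (C j).card - 1 ≤ (nbrsIn G (C j) v).card
  have hsub : nbrsIn G (C j) v ⊆ (C j).erase v := by
    intro w hw
    simp only [nbrsIn, Finset.mem_filter] at hw
    exact Finset.mem_erase.mpr ⟨(G.ne_of_adj hw.2).symm, hw.1⟩
  have hcard : (nbrsIn G (C j) v).card ≤ (C j).card - 1 := by
    calc (nbrsIn G (C j) v).card ≤ ((C j).erase v).card := Finset.card_le_card hsub
    _ = (C j).card - 1 := Finset.card_erase_of_mem hvj
  have heq : nbrsIn G (C j) v = (C j).erase v :=
    Finset.eq_of_subset_of_card_le hsub (by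
      rw [Finset.card_erase_of_mem hvj]; omega)
  intro w hw
  simp only [closedNbhd, Finset.mem_insert, SimpleGraph.mem_neighborFinset]
  by_cases hwv : w = v
  · left; exact hwv
  · right
    have : w ∈ nbrsIn G (C j) v := heq ▸ Finset.mem_erase.mpr ⟨hwv, hw⟩
    exact (Finset.mem_filter.mp this).2
end

section
/- A finite simple graph G = (V,E) with at least two vertices admits a generalized 2-community structure {C_1, C_2} with C_i = {u} for some i ∈ {1,2} and some vertex u ∈ V if and only if every neighbour of u is a universal vertex of G. -/
/-- A generalized 2-community structure of `G`: a partition `{C₁, C₂}` of the vertex set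
into two nonempty sets such that every vertex has proportionally at least as many
neighbours in its own part as in the other part. -/
def IsGen2Comm {V : Type*} [Fintype V] [DecidableEq V] (G : SimpleGraph V) [DecidableRel G.Adj]
    (C₁ C₂ : Finset V) : Prop :=
  C₁.Nonempty ∧ C₂.Nonempty ∧ Disjoint C₁ C₂ ∧ C₁ ∪ C₂ = Finset.univ ∧
  (∀ v ∈ C₁, (nbrsIn G C₂ v).card * (C₁.card - 1) ≤ (nbrsIn G C₁ v).card * C₂.card) ∧
  (∀ v ∈ C₂, (nbrsIn G C₁ v).card * (C₂.card - 1) ≤ (nbrsIn G C₂ v).card * C₁.card)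

/-- A graph with at least two vertices admits a generalized 2-community structure in which
some part equals `{u}` if and only if every neighbour of `u` is a universal vertex. -/
theorem stmt_3 {V : Type*} [Fintype V] [DecidableEq V] (G : SimpleGraph V) [DecidableRel G.Adj]
    (hcard : 2 ≤ Fintype.card V) (u : V) :
    (∃ C₁ C₂ : Finset V, IsGen2Comm G C₁ C₂ ∧ (C₁ = {u} ∨ C₂ = {u})) ↔
      (∀ w, G.Adj u w → closedNbhd G w = Finset.univ) := by
  constructor
  · rintro ⟨C₁, C₂, ⟨h1, h2, hdisj, hunion, hA, hB⟩, hC⟩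
    have key : ∀ D : Finset V, Disjoint {u} D → {u} ∪ D = Finset.univ →
        (∀ v ∈ D, (nbrsIn G {u} v).card * (D.card - 1) ≤
          (nbrsIn G D v).card * ({u} : Finset V).card) →
        ∀ w, G.Adj u w → closedNbhd G w = Finset.univ := by
      intro D hdisj' hun h w hw
      have hwu : w ≠ u := fun h' => G.irrefl (h' ▸ hw)
      have hwD : w ∈ D := by
        have : w ∈ ({u} : Finset V) ∪ D := hun ▸ Finset.mem_univ w
        rcases Finset.mem_union.1 this with h' | h'
        · exact absurd (Finset.mem_singleton.1 h') hwu
        · exact h'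
      have huD : u ∉ D := Finset.disjoint_left.1 hdisj' (Finset.mem_singleton_self u)
      have h1card : (nbrsIn G ({u} : Finset V) w).card = 1 := by
        have : nbrsIn G ({u} : Finset V) w = {u} := by
          ext x
          simp only [nbrsIn, Finset.mem_filter, Finset.mem_singleton]
          constructor
          · rintro ⟨hx, _⟩; exact hx
          · rintro rfl; exact ⟨rfl, hw.symm⟩
        rw [this, Finset.card_singleton]
      have hle := h w hwD
      rw [h1card, Finset.card_singleton, one_mul, mul_one] at hle
      have hsub : nbrsIn G D w ⊆ D.erase w := by
        intro x hx
        simp only [nbrsIn, Finset.mem_filter] at hx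
        exact Finset.mem_erase.2 ⟨fun h' => G.irrefl (h' ▸ hx.2), hx.1⟩
      have hcard:= Finset.card_erase_of_mem hwD
      have heq : nbrsIn G D w = D.erase w :=
        Finset.eq_of_subset_of_card_le hsub (by omega)
      ext x
      simp only [closedNbhd, Finset.mem_insert, SimpleGraph.mem_neighborFinset,
        Finset.mem_univ, iff_true]
      by_cases hxw : x = w
      · exact Or.inl hxw
      · by_cases hxu : x = u
        · exact Or.inr (hxu ▸ hw.symm)
        · have hxD : x ∈ D := by
            have : x ∈ ({u} : Finset V) ∪ D := hun ▸ Finset.mem_univ x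
            rcases Finset.mem_union.1 this with h' | h'
            · exact absurd (Finset.mem_singleton.1 h') hxu
            · exact h'
          have : x ∈ nbrsIn G D w := heq ▸ Finset.mem_erase.2 ⟨hxw, hxD⟩
          simp only [nbrsIn, Finset.mem_filter] at this
          exact Or.inr this.2
    rcases hC with rfl | rfl
    · exact key C₂ hdisj hunion hB
    · exact key C₁ hdisj.symm (by rw [Finset.union_comm]; exact hunion) hA
  · intro huniv
    refine ⟨{u}, Finset.univ \ {u}, ⟨Finset.singleton_nonempty u, ?_, ?_, ?_, ?_, ?_⟩, Or.inl rfl⟩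
    · obtain ⟨v, w, hvw⟩ := Fintype.exists_pair_of_one_lt_card hcard
      by_cases hv : v = u
      · exact ⟨w, Finset.mem_sdiff.2 ⟨Finset.mem_univ w,
          Finset.notMem_singleton.2 (by rw [← hv]; exact hvw.symm)⟩⟩
      · exact ⟨v, Finset.mem_sdiff.2 ⟨Finset.mem_univ v, Finset.notMem_singleton.2 hv⟩⟩
    · exact Finset.disjoint_left.2 fun x hx hx' =>
        (Finset.mem_sdiff.1 hx').2 hx
    · ext x
      simp only [Finset.mem_union, Finset.mem_sdiff, Finset.mem_univ, true_and,
        Finset.mem_singleton, iff_true]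
      tauto
    · intro v hv
      rw [Finset.card_singleton]
      simp
    · intro v hv
      rw [Finset.card_singleton, mul_one]
      obtain ⟨-, hvu⟩ := Finset.mem_sdiff.1 hv
      rw [Finset.notMem_singleton] at hvu
      by_cases hadj : G.Adj u v
      · have hcl := huniv v hadj
        have h1 : (nbrsIn G ({u} : Finset V) v).card ≤ 1 := by
          apply le_trans (Finset.card_filter_le _ _) (le_of_eq (Finset.card_singleton u))
        have hsub : (Finset.univ \ {u}).erase v ⊆ nbrsIn G (Finset.univ \ {u}) v := by
          intro x hx
          obtain ⟨hxv, hxD⟩ := Finset.mem_erase.1 hx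
          refine Finset.mem_filter.2 ⟨hxD, ?_⟩
          have : x ∈ closedNbhd G v := hcl ▸ Finset.mem_univ x
          rcases Finset.mem_insert.1 this with h' | h'
          · exact absurd h' hxv
          · exact (SimpleGraph.mem_neighborFinset _ _ _).1 h'
        have hD : v ∈ Finset.univ \ {u} := hv
        have hcount := Finset.card_le_card hsub
        rw [Finset.card_erase_of_mem hD] at hcount
        calc (nbrsIn G ({u} : Finset V) v).card * ((Finset.univ \ {u} : Finset V).card - 1)
            ≤ 1 * ((Finset.univ \ {u} : Finset V).card - 1) := by
              exact Nat.mul_le_mul_right _ h1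
          _ = (Finset.univ \ {u} : Finset V).card - 1 := one_mul _
          _ ≤ (nbrsIn G (Finset.univ \ {u}) v).card := hcount
      · have : nbrsIn G ({u} : Finset V) v = ∅ := by
          ext x
          simp only [nbrsIn, Finset.mem_filter, Finset.mem_singleton, Finset.notMem_empty,
            iff_false, not_and]
          rintro rfl h'
          exact hadj h'.symm
        rw [this, Finset.card_empty, zero_mul]
        exact Nat.zero_le _
end

section
/- Let G = (V,E) be a finite simple graph and let C_1', C_2' ⊂ V be nonempty disjoint subsets. Let U = V \ (C_1' ∪ C_2') and let v ∈ U. Set A = C_1' ∪ (U ∩ N[v]) and B = C_2' ∪ (U \ N[v]). If v (as a member of A) is not satisfied with respect to the partition {A, B}, i.e. |N_A(v)|·|B| < |N_B(v)|·(|A|−1), then G admits no generalized 2-community structure {C_1, C_2} with C_1' ∪ {v} ⊆ C_1 and C_2' ⊆ C_2. -/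
lemma key_arith (a b t cA cB cC1 cC2 : ℤ) (ha : 0 ≤ a) (hb : 0 ≤ b) (ht : 0 ≤ t)
    (hB : 0 ≤ cB) (hC2 : 0 ≤ cC2) (hA1 : 1 ≤ cA) (hC11 : 1 ≤ cC1)
    (H1 : (b+t)*(cC1-1) ≤ a*cC2) (H2 : cA+cB = cC1+cC2) (H3 : cA ≤ cC1+t)
    (H4 : a+b+t+1 ≤ cA+cB) : b*(cA-1) ≤ (a+t)*cB := by
  rcases le_or_gt cA cC1 with h | h
  · nlinarith [mul_nonneg ht hB, mul_nonneg (add_nonneg ha hb) (sub_nonneg.2 h)]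
  · nlinarith [mul_nonneg ht hB, mul_nonneg (add_nonneg ha hb) (by linarith : (0:ℤ) ≤ cA - cC1)]

lemma mem_nbrsIn {V : Type*} [DecidableEq V] (G : SimpleGraph V) [DecidableRel G.Adj]
    {C : Finset V} {v w : V} : w ∈ nbrsIn G C v ↔ w ∈ C ∧ G.Adj v w := Finset.mem_filter

/-- Let `C₁', C₂'` be nonempty disjoint subsets of the vertex set, `U` the set of
unassigned vertices and `v ∈ U`. Set `A = C₁' ∪ (U ∩ N[v])` and `B = C₂' ∪ (U \ N[v])`.
If `v` is not satisfied with respect to `{A, B}`, i.e. `|N_A(v)|·|B| < |N_B(v)|·(|A|−1)`,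
then `G` admits no generalized 2-community structure `{C₁, C₂}` with
`C₁' ∪ {v} ⊆ C₁` and `C₂' ⊆ C₂`. -/
theorem stmt_4 {V : Type*} [Fintype V] [DecidableEq V] (G : SimpleGraph V) [DecidableRel G.Adj]
    (C₁' C₂' : Finset V) (h1 : C₁'.Nonempty) (h2 : C₂'.Nonempty) (hd : Disjoint C₁' C₂')
    (v : V) (hv : v ∈ Finset.univ \ (C₁' ∪ C₂'))
    (hunsat :
      (nbrsIn G (C₁' ∪ ((Finset.univ \ (C₁' ∪ C₂')) ∩ closedNbhd G v)) v).card *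
          (C₂' ∪ ((Finset.univ \ (C₁' ∪ C₂')) \ closedNbhd G v)).card <
        (nbrsIn G (C₂' ∪ ((Finset.univ \ (C₁' ∪ C₂')) \ closedNbhd G v)) v).card *
          ((C₁' ∪ ((Finset.univ \ (C₁' ∪ C₂')) ∩ closedNbhd G v)).card - 1)) :
    ¬ ∃ C₁ C₂ : Finset V, IsGen2Comm G C₁ C₂ ∧ insert v C₁' ⊆ C₁ ∧ C₂' ⊆ C₂ := by
  rintro ⟨C₁, C₂, ⟨hn1, hn2, hdis, hcov, hs1, hs2⟩, hsub1, hsub2⟩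
  set U : Finset V := Finset.univ \ (C₁' ∪ C₂') with hU
  set Nv : Finset V := closedNbhd G v with hNv
  set A : Finset V := C₁' ∪ (U ∩ Nv) with hA
  set B : Finset V := C₂' ∪ (U \ Nv) with hB
  have hmemU : ∀ w : V, w ∈ U ↔ ¬ (w ∈ C₁' ∨ w ∈ C₂') := by
    intro w; simp only [hU, Finset.mem_sdiff, Finset.mem_univ, true_and, Finset.mem_union]
  have hmemNv : ∀ w : V, w ∈ Nv ↔ (w = v ∨ G.Adj v w) := by
    intro w; simp [hNv, closedNbhd]
  have hvC1 : v ∈ C₁ := hsub1 (Finset.mem_insert_self _ _)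
  have hC1'sub : C₁' ⊆ C₁ := fun w hw => hsub1 (Finset.mem_insert_of_mem hw)
  have hvU : v ∈ U := hv
  have hvA : v ∈ A := Finset.mem_union_right _
    (Finset.mem_inter.2 ⟨hvU, (hmemNv v).2 (Or.inl rfl)⟩)
  -- w ∈ C₁ with Adj v w implies w ∈ A
  have hC1A : ∀ w, w ∈ C₁ → G.Adj v w → w ∈ A := by
    intro w hw hadj
    by_cases hw1 : w ∈ C₁'
    · exact Finset.mem_union_left _ hw1
    · refine Finset.mem_union_right _ (Finset.mem_inter.2 ⟨(hmemU w).2 ?_, (hmemNv w).2 (Or.inr hadj)⟩)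
      rintro (h | h)
      · exact hw1 h
      · exact (Finset.disjoint_left.1 hdis hw) (hsub2 h)
  -- split of nbrsIn A v
  have hsplit : nbrsIn G A v = nbrsIn G C₁ v ∪ ((U ∩ Nv) \ C₁) := by
    ext w
    simp only [mem_nbrsIn, Finset.mem_union, Finset.mem_sdiff, Finset.mem_inter]
    constructor
    · rintro ⟨hwA, hadj⟩
      by_cases hw : w ∈ C₁
      · exact Or.inl ⟨hw, hadj⟩
      · rcases Finset.mem_union.1 hwA with h | h
        · exact absurd (hC1'sub h) hw
        · exact Or.inr ⟨Finset.mem_inter.1 h, hw⟩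
    · rintro (⟨hw, hadj⟩ | ⟨⟨hwU, hwNv⟩, hw⟩)
      · exact ⟨hC1A w hw hadj, hadj⟩
      · have hne : w ≠ v := fun h => hw (h ▸ hvC1)
        have hadj : G.Adj v w := ((hmemNv w).1 hwNv).resolve_left hne
        exact ⟨Finset.mem_union_right _ (Finset.mem_inter.2 ⟨hwU, hwNv⟩), hadj⟩
  have hdisj1 : Disjoint (nbrsIn G C₁ v) ((U ∩ Nv) \ C₁) :=
    Finset.disjoint_left.2 fun w hw hw' =>
      (Finset.mem_sdiff.1 hw').2 ((mem_nbrsIn G).1 hw).1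
  set a := (nbrsIn G C₁ v).card
  set b := (nbrsIn G C₂ v).card
  set al := (nbrsIn G A v).card
  set be := (nbrsIn G B v).card
  set t := ((U ∩ Nv) \ C₁).card with ht
  have halt : al = a + t := by
    show (nbrsIn G A v).card = a + t
    rw [hsplit]; exact Finset.card_union_of_disjoint hdisj1
  -- A ∪ B = univ, disjoint
  have hABcov : A ∪ B = Finset.univ := by
    ext w
    simp only [hA, hB, Finset.mem_union, Finset.mem_inter, Finset.mem_sdiff, Finset.mem_univ,
      iff_true]
    by_cases h1' : w ∈ C₁'
    · tauto
    · by_cases h2' : w ∈ C₂'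
      · tauto
      · have : w ∈ U := (hmemU w).2 (by tauto)
        by_cases hn : w ∈ Nv <;> tauto
  have hABdis : Disjoint A B := by
    rw [Finset.disjoint_left]
    intro w hw hw'
    rcases Finset.mem_union.1 hw with h | h <;> rcases Finset.mem_union.1 hw' with h' | h'
    · exact Finset.disjoint_left.1 hd h h'
    · exact ((hmemU w).1 (Finset.mem_sdiff.1 h').1) (Or.inl h)
    · exact ((hmemU w).1 (Finset.mem_inter.1 h).1) (Or.inr h')
    · exact (Finset.mem_sdiff.1 h').2 (Finset.mem_inter.1 h).2
  -- neighbour counts add up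
  have hnbrs_union : ∀ (X Y : Finset V), Disjoint X Y → X ∪ Y = Finset.univ →
      (nbrsIn G X v).card + (nbrsIn G Y v).card = (nbrsIn G Finset.univ v).card := by
    intro X Y hXY hXYc
    unfold nbrsIn
    rw [← Finset.card_union_of_disjoint (Finset.disjoint_filter_filter hXY),
      ← Finset.filter_union, hXYc]
  have hab : a + b = (nbrsIn G Finset.univ v).card := hnbrs_union C₁ C₂ hdis hcov
  have halbe : al + be = (nbrsIn G Finset.univ v).card := hnbrs_union A B hABdis hABcov
  -- degree bound
  have hdeg : (nbrsIn G Finset.univ v).card + 1 ≤ (Finset.univ : Finset V).card := by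
    have hsub : insert v (nbrsIn G Finset.univ v) ⊆ Finset.univ := Finset.subset_univ _
    have hvn : v ∉ nbrsIn G Finset.univ v := by
      simp [mem_nbrsIn]
    calc (nbrsIn G Finset.univ v).card + 1
        = (insert v (nbrsIn G Finset.univ v)).card := (Finset.card_insert_of_notMem hvn).symm
      _ ≤ (Finset.univ : Finset V).card := Finset.card_le_card hsub
  have hcard_univ1 : A.card + B.card = (Finset.univ : Finset V).card := by
    rw [← Finset.card_union_of_disjoint hABdis, hABcov]
  have hcard_univ2 : C₁.card + C₂.card = (Finset.univ : Finset V).card := by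
    rw [← Finset.card_union_of_disjoint hdis, hcov]
  -- A ⊆ C₁ ∪ ((U ∩ Nv) \ C₁)
  have hAsub : A.card ≤ C₁.card + t := by
    have : A ⊆ C₁ ∪ ((U ∩ Nv) \ C₁) := by
      intro w hw
      rcases Finset.mem_union.1 hw with h | h
      · exact Finset.mem_union_left _ (hC1'sub h)
      · by_cases hc : w ∈ C₁
        · exact Finset.mem_union_left _ hc
        · exact Finset.mem_union_right _ (Finset.mem_sdiff.2 ⟨h, hc⟩)
    calc A.card ≤ (C₁ ∪ ((U ∩ Nv) \ C₁)).card := Finset.card_le_card this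
      _ ≤ C₁.card + t := Finset.card_union_le _ _
  have hA1 : 1 ≤ A.card := Finset.card_pos.2 ⟨v, hvA⟩
  have hC11 : 1 ≤ C₁.card := Finset.card_pos.2 ⟨v, hvC1⟩
  have hH1 : b * (C₁.card - 1) ≤ a * C₂.card := hs1 v hvC1
  have hbbe : b = be + t := by omega
  -- cast to ℤ and conclude
  have key := key_arith (a) (be) (t) (A.card) (B.card) (C₁.card) (C₂.card)
    (by positivity) (by positivity) (by positivity) (by positivity) (by positivity)
    (by exact_mod_cast hA1) (by exact_mod_cast hC11)
    (by
      have : (be + t) * (C₁.card - 1) ≤ a * C₂.card := by rw [← hbbe]; exact hH1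
      push_cast [Nat.cast_sub hC11] at this ⊢
      exact_mod_cast this)
    (by exact_mod_cast hcard_univ1.trans hcard_univ2.symm)
    (by exact_mod_cast hAsub)
    (by
      have : a + be + t + 1 ≤ A.card + B.card := by omega
      exact_mod_cast this)
  have hlt : (al : ℤ) * B.card < (be : ℤ) * (A.card - 1) := by
    have := hunsat
    push_cast [Nat.cast_sub hA1] at this ⊢
    exact_mod_cast this
  have : (al : ℤ) = a + t := by exact_mod_cast halt
  nlinarith [key, hlt]
end

section
/- Let u and v be two true twins in a finite simple graph G = (V,E) such that neither u nor v is universal. Then in every generalized 2-community structure of G, the vertices u and v belong to the same part. -/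
lemma mem_closedNbhd' {V : Type*} [Fintype V] [DecidableEq V] (G : SimpleGraph V)
    [DecidableRel G.Adj] (v w : V) : w ∈ closedNbhd G v ↔ w = v ∨ G.Adj v w := by
  simp [closedNbhd]

lemma nbrsIn_twin {V : Type*} [Fintype V] [DecidableEq V] (G : SimpleGraph V)
    [DecidableRel G.Adj] (u v : V) (htwin : closedNbhd G u = closedNbhd G v)
    (hadj : G.Adj u v) (C : Finset V) (hvC : v ∉ C) (huC : u ∈ C) :
    nbrsIn G C v = insert u (nbrsIn G C u) := by
  ext w
  simp only [nbrsIn, Finset.mem_filter, Finset.mem_insert]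
  have htw : (w = u ∨ G.Adj u w) ↔ (w = v ∨ G.Adj v w) := by
    rw [← mem_closedNbhd', ← mem_closedNbhd', htwin]
  constructor
  · rintro ⟨hwC, hadjvw⟩
    rcases htw.mpr (Or.inr hadjvw) with h | h
    · exact Or.inl h
    · exact Or.inr ⟨hwC, h⟩
  · rintro (rfl | ⟨hwC, hadjuw⟩)
    · exact ⟨huC, hadj.symm⟩
    · rcases htw.mp (Or.inr hadjuw) with h | h
      · exact absurd (h ▸ hwC) hvC
      · exact ⟨hwC, h⟩

lemma twin_key {V : Type*} [Fintype V] [DecidableEq V] (G : SimpleGraph V)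
    [DecidableRel G.Adj] (u v : V) (huv : u ≠ v)
    (htwin : closedNbhd G u = closedNbhd G v) (hu : closedNbhd G u ≠ Finset.univ)
    (C₁ C₂ : Finset V) (hdisj : Disjoint C₁ C₂) (hun : C₁ ∪ C₂ = Finset.univ)
    (h1 : ∀ x ∈ C₁, (nbrsIn G C₂ x).card * (C₁.card - 1) ≤ (nbrsIn G C₁ x).card * C₂.card)
    (h2 : ∀ x ∈ C₂, (nbrsIn G C₁ x).card * (C₂.card - 1) ≤ (nbrsIn G C₂ x).card * C₁.card)
    (hu1 : u ∈ C₁) (hv2 : v ∈ C₂) : False := by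
  have hadj : G.Adj u v := by
    have hmem : v ∈ closedNbhd G u := by rw [htwin, mem_closedNbhd']; left; rfl
    rcases (mem_closedNbhd' G u v).mp hmem with h | h
    · exact absurd h.symm huv
    · exact h
  have hvC1 : v ∉ C₁ := fun h => (Finset.disjoint_left.mp hdisj h) hv2
  have huC2 : u ∉ C₂ := fun h => (Finset.disjoint_left.mp hdisj hu1) h
  have E1 : nbrsIn G C₁ v = insert u (nbrsIn G C₁ u) :=
    nbrsIn_twin G u v htwin hadj C₁ hvC1 hu1
  have E2 : nbrsIn G C₂ u = insert v (nbrsIn G C₂ v) :=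
    nbrsIn_twin G v u htwin.symm hadj.symm C₂ huC2 hv2
  set a := (nbrsIn G C₁ u).card with ha
  set b := (nbrsIn G C₂ v).card with hb
  have hunotin : u ∉ nbrsIn G C₁ u := by simp [nbrsIn]
  have hvnotin : v ∉ nbrsIn G C₂ v := by simp [nbrsIn]
  have c1 : (nbrsIn G C₁ v).card = a + 1 := by
    rw [E1, Finset.card_insert_of_notMem hunotin]
  have c2 : (nbrsIn G C₂ u).card = b + 1 := by
    rw [E2, Finset.card_insert_of_notMem hvnotin]
  have hNu : closedNbhd G u = insert u (nbrsIn G C₁ u ∪ nbrsIn G C₂ u) := by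
    ext w
    simp only [mem_closedNbhd', Finset.mem_insert, Finset.mem_union, nbrsIn, Finset.mem_filter]
    constructor
    · rintro (h | h)
      · exact Or.inl h
      · right
        have hw : w ∈ C₁ ∪ C₂ := hun ▸ Finset.mem_univ w
        rcases Finset.mem_union.mp hw with h' | h'
        · exact Or.inl ⟨h', h⟩
        · exact Or.inr ⟨h', h⟩
    · rintro (h | ⟨_, h⟩ | ⟨_, h⟩)
      · exact Or.inl h
      · exact Or.inr h
      · exact Or.inr h
  have hdisj' : Disjoint (nbrsIn G C₁ u) (nbrsIn G C₂ u) :=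
    hdisj.mono (Finset.filter_subset _ _) (Finset.filter_subset _ _)
  have hunotin2 : u ∉ nbrsIn G C₁ u ∪ nbrsIn G C₂ u := by simp [nbrsIn]
  have cardNu : (closedNbhd G u).card = a + (b + 1) + 1 := by
    rw [hNu, Finset.card_insert_of_notMem hunotin2,
      Finset.card_union_of_disjoint hdisj', c2]
  have cardU : C₁.card + C₂.card = Fintype.card V := by
    rw [← Finset.card_union_of_disjoint hdisj, hun, Finset.card_univ]
  have hlt : (closedNbhd G u).card < Fintype.card V := by
    rw [← Finset.card_univ]
    exact Finset.card_lt_card ((Finset.ssubset_univ_iff).mpr hu)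
  have hn1 : 1 ≤ C₁.card := Finset.card_pos.mpr ⟨u, hu1⟩
  have hn2 : 1 ≤ C₂.card := Finset.card_pos.mpr ⟨v, hv2⟩
  obtain ⟨m₁, hm₁⟩ : ∃ m, C₁.card = m + 1 := ⟨C₁.card - 1, by omega⟩
  obtain ⟨m₂, hm₂⟩ : ∃ m, C₂.card = m + 1 := ⟨C₂.card - 1, by omega⟩
  have I1 := h1 u hu1
  have I2 := h2 v hv2
  rw [c2, hm₁, hm₂, Nat.add_sub_cancel] at I1
  rw [c1, hm₁, hm₂, Nat.add_sub_cancel] at I2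
  -- I1 : (b+1) * m₁ ≤ a * (m₂+1), I2 : (a+1) * m₂ ≤ b * (m₁+1)
  have F3 : a + b + 1 ≤ m₁ + m₂ := by omega
  nlinarith [I1, I2, F3]

/-- If `u` and `v` are two non-universal true twins (`N[u] = N[v]`), then in every
generalized 2-community structure of `G` they belong to the same part. -/
theorem stmt_5 {V : Type*} [Fintype V] [DecidableEq V] (G : SimpleGraph V) [DecidableRel G.Adj]
    (u v : V) (huv : u ≠ v)
    (htwin : closedNbhd G u = closedNbhd G v)
    (hu : closedNbhd G u ≠ Finset.univ) (hv : closedNbhd G v ≠ Finset.univ)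
    (C₁ C₂ : Finset V) (hcomm : IsGen2Comm G C₁ C₂) :
    (u ∈ C₁ ↔ v ∈ C₁) := by
  obtain ⟨-, -, hdisj, hun, h1, h2⟩ := hcomm
  have hall : ∀ w : V, w ∈ C₁ ∨ w ∈ C₂ := fun w =>
    Finset.mem_union.mp (hun ▸ Finset.mem_univ w)
  constructor
  · intro hu1
    by_contra hv1
    have hv2 : v ∈ C₂ := (hall v).resolve_left hv1
    exact twin_key G u v huv htwin hu C₁ C₂ hdisj hun h1 h2 hu1 hv2
  · intro hv1
    by_contra hu1
    have hu2 : u ∈ C₂ := (hall u).resolve_left hu1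
    exact twin_key G u v huv htwin hu C₂ C₁ hdisj.symm
      (by rw [Finset.union_comm]; exact hun) h2 h1 hu2 hv1
end

section
/- If a finite simple graph G = (V,E) without isolated vertices admits a k-community structure, then G has a matching of size k. -/
/-- A `k`-community structure of `G`: a partition of the vertex set into `k` sets,
each of size at least 2, such that for all `i`, all `v ∈ C i` and all `j ≠ i`:
`|N_{C i}(v)| * |C j| ≥ |N_{C j}(v)| * (|C i| - 1)`. -/
def IsKComm {V : Type*} [Fintype V] [DecidableEq V] (G : SimpleGraph V) [DecidableRel G.Adj]
    {k : ℕ} (C : Fin k → Finset V) : Prop :=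
  (∀ i, 2 ≤ (C i).card) ∧
  (∀ i j, i ≠ j → Disjoint (C i) (C j)) ∧
  (∀ v : V, ∃ i, v ∈ C i) ∧
  (∀ i j, i ≠ j → ∀ v ∈ C i,
    (nbrsIn G (C j) v).card * ((C i).card - 1) ≤ (nbrsIn G (C i) v).card * (C j).card)

/-- `G` has a matching of size `k`: a set of `k` pairwise disjoint edges of `G`. -/
def HasMatchingOfSize {V : Type*} (G : SimpleGraph V) (k : ℕ) : Prop :=
  ∃ M : Finset (Sym2 V), M.card = k ∧ (∀ e ∈ M, e ∈ G.edgeSet) ∧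
    ∀ e ∈ M, ∀ f ∈ M, e ≠ f → ∀ x : V, x ∈ e → x ∉ f

/-- If a graph without isolated vertices admits a `k`-community structure, then it has a
matching of size `k`. -/
theorem stmt_6 {V : Type*} [Fintype V] [DecidableEq V] (G : SimpleGraph V) [DecidableRel G.Adj]
    {k : ℕ} (hk : 2 ≤ k) (hnoiso : ∀ v : V, ∃ w, G.Adj v w)
    (C : Fin k → Finset V) (hcomm : IsKComm G C) :
    HasMatchingOfSize G k := by
  obtain ⟨h2, hdisj, hcover, hineq⟩ := hcomm
  have key : ∀ i : Fin k, ∃ v w, v ∈ C i ∧ w ∈ C i ∧ G.Adj v w := by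
    intro i
    have hcard : 0 < (C i).card := by have := h2 i; omega
    obtain ⟨v, hv⟩ := Finset.card_pos.mp hcard
    obtain ⟨w, hvw⟩ := hnoiso v
    obtain ⟨j, hwj⟩ := hcover w
    by_cases hij : j = i
    · exact ⟨v, w, hv, hij ▸ hwj, hvw⟩
    · have h1 : 1 ≤ (nbrsIn G (C j) v).card := by
        apply Finset.card_pos.mpr
        exact ⟨w, Finset.mem_filter.mpr ⟨hwj, hvw⟩⟩
      have hle := hineq i j (fun h => hij h.symm) v hv
      have hci : 1 ≤ (C i).card - 1 := by have := h2 i; omega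
      have : 1 ≤ (nbrsIn G (C i) v).card * (C j).card := by
        calc 1 ≤ (nbrsIn G (C j) v).card * ((C i).card - 1) := Nat.one_le_iff_ne_zero.mpr (by positivity)
          _ ≤ _ := hle
      have hpos : 0 < (nbrsIn G (C i) v).card := by
        rcases Nat.eq_zero_or_pos (nbrsIn G (C i) v).card with h | h
        · simp [h] at this
        · exact h
      obtain ⟨u, hu⟩ := Finset.card_pos.mp hpos
      rw [nbrsIn, Finset.mem_filter] at hu
      exact ⟨v, u, hv, hu.1, hu.2⟩
  choose v w hv hw hadj using key
  have hmemC : ∀ i : Fin k, ∀ x : V, x ∈ s(v i, w i) → x ∈ C i := by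
    intro i x hx
    rw [Sym2.mem_iff] at hx
    rcases hx with rfl | rfl
    · exact hv i
    · exact hw i
  refine ⟨Finset.image (fun i => s(v i, w i)) Finset.univ, ?_, ?_, ?_⟩
  · rw [Finset.card_image_of_injective _ ?_, Finset.card_univ, Fintype.card_fin]
    intro i j hij
    by_contra hne
    have hvi : v i ∈ s(v j, w j) := by simp only [] at hij; rw [← hij]; exact Sym2.mem_mk_left _ _
    simpa using (hdisj i j hne).le_bot (Finset.mem_inter.mpr ⟨hv i, hmemC j _ hvi⟩)
  · intro e he
    obtain ⟨i, _, rfl⟩ := Finset.mem_image.mp he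
    exact hadj i
  · intro e he f hf hef x hxe hxf
    obtain ⟨i, _, rfl⟩ := Finset.mem_image.mp he
    obtain ⟨j, _, rfl⟩ := Finset.mem_image.mp hf
    have hne : i ≠ j := fun h => hef (by rw [h])
    simpa using (hdisj i j hne).le_bot (Finset.mem_inter.mpr ⟨hmemC i x hxe, hmemC j x hxf⟩)
end

section
/- Let k ≥ 2 be an integer, let T = (V,E) be a finite tree with |V| ≥ k, let Π be a connected k-partition of T, and let v ∈ V be a vertex that is not satisfied with respect to Π. Then there exists a connected k-partition Π' of T whose size tuple is lexicographically strictly larger than the size tuple of Π. -/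
/-- A connected `k`-partition of `G`: a partition of the vertex set into `k` nonempty
sets, each inducing a connected subgraph. -/
def IsConnKPartition {V : Type*} [Fintype V] [DecidableEq V] (G : SimpleGraph V)
    {k : ℕ} (C : Fin k → Finset V) : Prop :=
  (∀ i, (C i).Nonempty) ∧
  (∀ i j, i ≠ j → Disjoint (C i) (C j)) ∧
  (∀ v : V, ∃ i, v ∈ C i) ∧
  (∀ i, (G.induce (↑(C i) : Set V)).Connected)

/-- The size tuple of a `k`-partition: the list of part sizes in nondecreasing order. -/
def sizeTuple {V : Type*} [DecidableEq V] {k : ℕ} (C : Fin k → Finset V) : List ℕ :=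
  (Multiset.map (fun i => (C i).card) (Finset.univ : Finset (Fin k)).val).sort (· ≤ ·)

namespace List

theorem lex_lt_of_count_lt {α : Type*} [LinearOrder α] (c : α) :
    ∀ {l₁ l₂ : List α}, l₁.Pairwise (· ≤ ·) → l₂.Pairwise (· ≤ ·) → l₁.length = l₂.length →
      (∀ b < c, l₁.count b = l₂.count b) → l₂.count c < l₁.count c → Lex (· < ·) l₁ l₂
  | [], _, _, _, _, _, hc => by simp at hc
  | _ :: _, [], _, _, hlen, _, _ => by simp at hlen
  | x :: l₁, y :: l₂, h₁, h₂, hlen, hbelow, hc => by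
    rw [pairwise_cons] at h₁ h₂
    have hxc : x ≤ c := by
      rcases mem_cons.mp (count_pos_iff.mp (Nat.zero_lt_of_lt hc)) with rfl | hc
      exacts [le_rfl, h₁.1 c hc]
    rcases lt_trichotomy x y with hxy | rfl | hyx
    · exact Lex.rel hxy
    · refine Lex.cons (lex_lt_of_count_lt c h₁.2 h₂.2 (by simpa using hlen) (fun b hb => ?_) ?_)
      · have := hbelow b hb
        rw [count_cons, count_cons] at this
        omega
      · rw [count_cons, count_cons] at hc
        omega
    · -- `y < c`, so `y` occurs in `x :: l₁`, whose entries are all `≥ x`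
      have hy : y ∈ x :: l₁ := by
        rw [← count_pos_iff, hbelow y (hyx.trans_le hxc)]
        exact count_pos_iff.mpr mem_cons_self
      rcases mem_cons.mp hy with rfl | hy
      exacts [(lt_irrefl _ hyx).elim, ((h₁.1 y hy).not_gt hyx).elim]

end List

namespace Multiset

theorem count_sort {α : Type*} [LinearOrder α] (s : Multiset α) (a : α) :
    (s.sort (· ≤ ·)).count a = s.count a := by
  rw [← coe_count, sort_eq]

theorem lex_sort_cons_cons {α : Type*} [LinearOrder α] (m : Multiset α) {a b x y : α}
    (hx : min a b < x) (hy : min a b < y) :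
    List.Lex (· < ·) ((a ::ₘ b ::ₘ m).sort (· ≤ ·)) ((x ::ₘ y ::ₘ m).sort (· ≤ ·)) := by
  refine List.lex_lt_of_count_lt (min a b) (pairwise_sort _ _) (pairwise_sort _ _)
    (by simp) (fun c hc => ?_) ?_ <;> simp only [count_sort, count_cons]
  · have ha := hc.trans_le (min_le_left a b)
    have hb := hc.trans_le (min_le_right a b)
    simp [ha.ne, hb.ne, (hc.trans hx).ne, (hc.trans hy).ne]
  · rcases min_choice a b with h | h <;> rw [h] at hx hy ⊢ <;> simp [hx.ne, hy.ne, add_assoc]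

end Multiset

namespace SimpleGraph

variable {V : Type*} {G : SimpleGraph V} {s t : Set V} {u v w x y z : V}

def ReachableIn (G : SimpleGraph V) (s : Set V) (x y : V) : Prop :=
  ∃ p : G.Walk x y, ∀ z ∈ p.support, z ∈ s

namespace ReachableIn

theorem refl (hx : x ∈ s) : G.ReachableIn s x x := ⟨.nil, by simpa⟩

theorem symm (h : G.ReachableIn s x y) : G.ReachableIn s y x :=
  let ⟨p, hp⟩ := h
  ⟨p.reverse, by simpa using hp⟩

theorem trans (hxy : G.ReachableIn s x y) (hyz : G.ReachableIn s y z) : G.ReachableIn s x z :=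
  let ⟨p, hp⟩ := hxy
  let ⟨q, hq⟩ := hyz
  ⟨p.append q, by simp only [Walk.mem_support_append_iff]; rintro w (hw | hw) <;> simp [*]⟩

theorem mono (h : G.ReachableIn s x y) (hst : s ⊆ t) : G.ReachableIn t x y :=
  let ⟨p, hp⟩ := h
  ⟨p, fun z hz => hst (hp z hz)⟩

theorem mem_right (h : G.ReachableIn s x y) : y ∈ s :=
  let ⟨p, hp⟩ := h
  hp y p.end_mem_support

end ReachableIn

theorem Adj.reachableIn (h : G.Adj x y) (hx : x ∈ s) (hy : y ∈ s) : G.ReachableIn s x y :=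
  ⟨h.toWalk, by simp [hx, hy]⟩

theorem Walk.reachableIn_of_mem_support (p : G.Walk x y) (hp : ∀ z ∈ p.support, z ∈ s)
    (hz : z ∈ p.support) : G.ReachableIn s x z := by
  classical
  exact ⟨p.takeUntil z hz, fun w hw => hp w (p.support_takeUntil_subset_support hz hw)⟩

theorem Connected.reachableIn (h : (G.induce s).Connected) (hx : x ∈ s) (hy : y ∈ s) :
    G.ReachableIn s x y := by
  obtain ⟨p, hp⟩ :=
    ((Subgraph.connected_iff_forall_exists_walk_subgraph _).mp (connected_induce_iff.mp h)).2 hx hy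
  exact ⟨p, fun z hz => by simpa using hp.1 (p.mem_verts_toSubgraph.mpr hz)⟩

theorem connected_induce_of_forall_reachableIn (hu : u ∈ s)
    (h : ∀ x ∈ s, G.ReachableIn s u x) : (G.induce s).Connected :=
  induce_connected_of_patches u hu fun hx =>
    let ⟨p, hp⟩ := h _ hx
    ⟨{z | z ∈ p.support}, hp, p.start_mem_support, p.end_mem_support,
      (p.connected_induce_support).preconnected _ _⟩

theorem Walk.exists_reachableIn_adj_notMem (p : G.Walk x y) (hx : x ∈ s) (hy : y ∉ s) :
    ∃ z z', G.ReachableIn s x z ∧ G.Adj z z' ∧ z' ∉ s ∧ z' ∈ p.support := by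
  induction p with
  | nil => exact absurd hx hy
  | @cons x x' y h q ih =>
    by_cases hx' : x' ∈ s
    · obtain ⟨z, z', hz, hzz', hz', hmem⟩ := ih hx' hy
      exact ⟨z, z', (h.reachableIn hx hx').trans hz, hzz', hz', by simp [hmem]⟩
    · exact ⟨x, x', .refl hx, h, hx', by simp⟩

theorem IsAcyclic.eq_of_adj_of_reachableIn (hG : G.IsAcyclic) (hv : v ∉ s) {u u' : V}
    (h : G.ReachableIn s u u') (hu : G.Adj v u) (hu' : G.Adj v u') : u = u' := by
  classical
  obtain ⟨q, hq⟩ := h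
  have hvq : v ∉ q.bypass.support := fun hvq => hv (hq v (q.support_bypass_subset_support hvq))
  have := hG.mem_support_of_ne_mem_support_of_adj_of_isPath (Walk.IsPath.of_adj hu.symm)
    q.bypass_isPath hu' hvq
  simpa [hu'.ne', eq_comm] using this

variable {a : Finset V}

open Classical in
/-- The component of `w` in `G[s]`; empty if `w ∉ s`. -/
noncomputable def componentIn (G : SimpleGraph V) (s : Finset V) (w : V) : Finset V :=
  s.filter (G.ReachableIn s w)

@[simp]
theorem mem_componentIn : x ∈ G.componentIn a w ↔ G.ReachableIn a w x := by
  classical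
  simp only [componentIn, Finset.mem_filter, and_iff_right_iff_imp]
  exact fun h => h.mem_right

theorem componentIn_subset : G.componentIn a w ⊆ a :=
  fun _ hx => (mem_componentIn.mp hx).mem_right

theorem connected_induce_componentIn (hw : w ∈ a) :
    (G.induce (G.componentIn a w : Set V)).Connected := by
  refine connected_induce_of_forall_reachableIn (u := w) (by simpa using .refl hw) ?_
  rintro x hx
  obtain ⟨p, hp⟩ := mem_componentIn.mp hx
  exact ⟨p, fun z hz => mem_componentIn.mpr (p.reachableIn_of_mem_support hp hz)⟩

section DecidableEq

variable [DecidableEq V]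

theorem ReachableIn.sdiff_componentIn (h : G.ReachableIn a x y) (hx : x ∉ G.componentIn a w) :
    G.ReachableIn ↑(a \ G.componentIn a w) x y := by
  obtain ⟨p, hp⟩ := h
  refine ⟨p, fun z hz => ?_⟩
  simp only [Finset.coe_sdiff, Set.mem_sdiff, Finset.mem_coe, mem_componentIn]
  exact ⟨hp z hz, fun hwz => hx (mem_componentIn.mpr
    (hwz.trans (p.reachableIn_of_mem_support hp hz).symm))⟩

variable [DecidableRel G.Adj]

theorem IsAcyclic.card_nbrsIn_le_one (hG : G.IsAcyclic) (ha : (G.induce (a : Set V)).Connected)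
    (hv : v ∉ a) : (nbrsIn G a v).card ≤ 1 := by
  simp only [Finset.card_le_one, nbrsIn, Finset.mem_filter]
  exact fun u hu u' hu' => hG.eq_of_adj_of_reachableIn (s := a) hv
    (ha.reachableIn hu.1 hu'.1) hu.2 hu'.2

theorem exists_mem_nbrsIn_reachableIn_erase (ha : (G.induce (a : Set V)).Connected)
    (hv : v ∈ a) (hx : x ∈ a.erase v) : ∃ w ∈ nbrsIn G a v, G.ReachableIn ↑(a.erase v) x w := by
  obtain ⟨p, hp⟩ := ha.reachableIn (Finset.mem_of_mem_erase hx) hv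
  obtain ⟨w, z, hw, hwz, hz, hzp⟩ :=
    p.exists_reachableIn_adj_notMem (s := ↑(a.erase v)) hx (by simp)
  obtain rfl : z = v := by simpa [hp z hzp] using hz
  exact ⟨w, Finset.mem_filter.mpr ⟨Finset.mem_of_mem_erase hw.mem_right, hwz.symm⟩, hw⟩

-- Every other component of `G[a] - v` contains a neighbour of `v`.
theorem connected_induce_sdiff_componentIn (ha : (G.induce (a : Set V)).Connected) (hv : v ∈ a)
    (w : V) : (G.induce ↑(a \ G.componentIn (a.erase v) w)).Connected := by
  have hvB : v ∉ G.componentIn (a.erase v) w := fun h => by simpa using componentIn_subset h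
  have hvD : v ∈ (↑(a \ G.componentIn (a.erase v) w) : Set V) := by simp [hv, hvB]
  refine connected_induce_of_forall_reachableIn hvD fun x hx => ?_
  rw [Finset.mem_coe, Finset.mem_sdiff] at hx
  obtain rfl | hxv := eq_or_ne x v
  · exact .refl hvD
  obtain ⟨w', hw', hxw'⟩ :=
    exists_mem_nbrsIn_reachableIn_erase ha hv (Finset.mem_erase.mpr ⟨hxv, hx.1⟩)
  have hxw'' := (hxw'.sdiff_componentIn hx.2).mono
    (Finset.coe_subset.mpr (Finset.sdiff_subset_sdiff (Finset.erase_subset v a) le_rfl))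
  exact (hxw''.trans (Adj.reachableIn (Finset.mem_filter.mp hw').2.symm hxw''.mem_right hvD)).symm

theorem exists_card_erase_le_mul_card_componentIn (ha : (G.induce (a : Set V)).Connected)
    (hv : v ∈ a) (hne : (a.erase v).Nonempty) : ∃ w ∈ nbrsIn G a v,
      (a.erase v).card ≤ (nbrsIn G a v).card * (G.componentIn (a.erase v) w).card := by
  have hcover : a.erase v ⊆ (nbrsIn G a v).biUnion (G.componentIn (a.erase v)) := fun x hx => by
    obtain ⟨w, hw, hxw⟩ := exists_mem_nbrsIn_reachableIn_erase ha hv hx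
    exact Finset.mem_biUnion.mpr ⟨w, hw, mem_componentIn.mpr hxw.symm⟩
  obtain ⟨w₀, hw₀, -⟩ := Finset.biUnion_nonempty.mp (hne.mono hcover)
  obtain ⟨w, hw, hmax⟩ := Finset.exists_max_image (nbrsIn G a v)
    (fun w => (G.componentIn (a.erase v) w).card) ⟨w₀, hw₀⟩
  exact ⟨w, hw, (Finset.card_le_card hcover).trans (Finset.card_biUnion_le_card_mul _ _ _ hmax)⟩

theorem exists_branch_card_gt (ha : (G.induce (a : Set V)).Connected) (hv : v ∈ a) {m : ℕ}
    (hm : (nbrsIn G a v).card * m < a.card - 1) : ∃ B ⊆ a.erase v, m < B.card ∧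
      (G.induce (B : Set V)).Connected ∧ (G.induce ↑(a \ B)).Connected := by
  rw [← Finset.card_erase_of_mem hv] at hm
  obtain ⟨w, hw, hcard⟩ :=
    exists_card_erase_le_mul_card_componentIn ha hv (Finset.card_pos.mp (by omega))
  have hw' : w ∈ a.erase v := by
    rw [nbrsIn, Finset.mem_filter] at hw
    exact Finset.mem_erase.mpr ⟨hw.2.ne', hw.1⟩
  exact ⟨_, componentIn_subset, Nat.lt_of_mul_lt_mul_left (hm.trans_le hcard),
    connected_induce_componentIn hw', connected_induce_sdiff_componentIn ha hv w⟩

end DecidableEq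

end SimpleGraph

section Partition

variable {V : Type*} [DecidableEq V] {k : ℕ}

theorem IsConnKPartition.update_update [Fintype V] {G : SimpleGraph V} {C : Fin k → Finset V}
    (hC : IsConnKPartition G C) {i j : Fin k} (hij : i ≠ j) {X Y : Finset V} (hXY : Disjoint X Y)
    (hunion : X ∪ Y = C i ∪ C j) (hX : (G.induce (X : Set V)).Connected)
    (hY : (G.induce (Y : Set V)).Connected) :
    IsConnKPartition G (Function.update (Function.update C i X) j Y) := by
  obtain ⟨-, hdisj, hcov, hconn⟩ := hC
  have hrest : ∀ t, t ≠ i → t ≠ j → Disjoint (C t) X ∧ Disjoint (C t) Y := fun t hti htj => by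
    rw [← Finset.disjoint_union_right, hunion]
    exact Finset.disjoint_union_right.mpr ⟨hdisj t i hti, hdisj t j htj⟩
  have hconn' :
      ∀ t, (G.induce (Function.update (Function.update C i X) j Y t : Set V)).Connected := by
    intro t
    rcases eq_or_ne t j with rfl | htj
    · rwa [Function.update_self]
    rcases eq_or_ne t i with rfl | hti
    · rwa [Function.update_of_ne hij, Function.update_self]
    · rw [Function.update_of_ne htj, Function.update_of_ne hti]
      exact hconn t
  refine ⟨fun t => ?_, fun s t hst => ?_, fun x => ?_, hconn'⟩
  · obtain ⟨⟨x, hx⟩⟩ := (hconn' t).nonempty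
    exact ⟨x, hx⟩
  · simp only [Function.update_apply]
    split_ifs <;> subst_vars <;> first
      | exact absurd rfl hst
      | exact hXY | exact hXY.symm | exact hdisj _ _ hst
      | exact (hrest _ (by assumption) (by assumption)).1
      | exact (hrest _ (by assumption) (by assumption)).2
      | exact (hrest _ (by assumption) (by assumption)).1.symm
      | exact (hrest _ (by assumption) (by assumption)).2.symm
  · obtain ⟨t, ht⟩ := hcov x
    by_cases hijt : t = i ∨ t = j
    · have hx : x ∈ X ∪ Y := hunion ▸ by rcases hijt with rfl | rfl <;> simp [ht]
      rcases Finset.mem_union.mp hx with hx | hx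
      exacts [⟨i, by simp [hij, hx]⟩, ⟨j, by simp [hx]⟩]
    · push Not at hijt
      exact ⟨t, by simp [hijt.1, hijt.2, ht]⟩

theorem sizeTuple_lex_update_update (C : Fin k → Finset V) {i j : Fin k} (hij : i ≠ j)
    {X Y : Finset V} (hX : min (C i).card (C j).card < X.card)
    (hY : min (C i).card (C j).card < Y.card) :
    List.Lex (· < ·) (sizeTuple C) (sizeTuple (Function.update (Function.update C i X) j Y)) := by
  set rest := ((Finset.univ.erase i).erase j).val
  have huniv : (Finset.univ : Finset (Fin k)).val = i ::ₘ j ::ₘ rest := by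
    rw [← Finset.insert_val_of_notMem (by simp), ← Finset.insert_val_of_notMem (by simp [hij]),
      Finset.insert_erase (by simp [hij.symm]), Finset.insert_erase (Finset.mem_univ i)]
  have hrest : rest.map (fun t => (Function.update (Function.update C i X) j Y t).card) =
      rest.map (fun t => (C t).card) :=
    Multiset.map_congr rfl fun t ht => by
      have ht := Finset.mem_val.mp ht
      simp only [Finset.mem_erase] at ht
      simp [ht.1, ht.2.1]
  unfold sizeTuple
  rw [huniv, Multiset.map_cons, Multiset.map_cons, Multiset.map_cons, Multiset.map_cons, hrest,
    Function.update_of_ne hij, Function.update_self, Function.update_self]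
  exact Multiset.lex_sort_cons_cons _ hX hY

end Partition

theorem stmt_7_general {V : Type*} [Fintype V] [DecidableEq V] (G : SimpleGraph V) [DecidableRel G.Adj]
    (htree : G.IsTree) {k : ℕ}
    (C : Fin k → Finset V) (hC : IsConnKPartition G C)
    (v : V) (i : Fin k) (hvi : v ∈ C i) (j : Fin k) (hij : j ≠ i)
    (hunsat : (nbrsIn G (C i) v).card * (C j).card <
      (nbrsIn G (C j) v).card * ((C i).card - 1)) :
    ∃ C' : Fin k → Finset V, IsConnKPartition G C' ∧
      List.Lex (· < ·) (sizeTuple C) (sizeTuple C') := by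
  have hconn := hC.2.2.2
  have hdisj : Disjoint (C i) (C j) := hC.2.1 i j hij.symm
  have hnbr : (nbrsIn G (C j) v).card ≤ 1 :=
    htree.isAcyclic.card_nbrsIn_le_one (hconn j) (Finset.disjoint_left.mp hdisj hvi)
  obtain ⟨u, hu⟩ : (nbrsIn G (C j) v).Nonempty :=
    Finset.card_pos.mp (Nat.pos_of_mul_pos_right (Nat.zero_lt_of_lt hunsat))
  obtain ⟨huj, hvu⟩ := Finset.mem_filter.mp hu
  obtain ⟨B, hB, hjB, hBconn, hrestconn⟩ := SimpleGraph.exists_branch_card_gt (hconn i) hvi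
    (hunsat.trans_le (mul_le_of_le_one_left' hnbr))
  have hBi : B ⊆ C i := hB.trans (Finset.erase_subset v (C i))
  have hvB : v ∉ B := fun h => by simpa using hB h
  have hBlt : B.card < (C i).card := Finset.card_lt_card ⟨hBi, fun h => hvB (h hvi)⟩
  refine ⟨_, hC.update_update hij.symm (X := B) (Y := C j ∪ (C i \ B))
    (Finset.disjoint_union_right.mpr ⟨hdisj.mono_left hBi, Finset.disjoint_sdiff⟩)
    (by rw [Finset.union_left_comm, Finset.union_sdiff_of_subset hBi, Finset.union_comm])
    hBconn ?_, sizeTuple_lex_update_update C hij.symm ?_ ?_⟩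
  · rw [Finset.coe_union]
    exact SimpleGraph.connected_induce_union (hconn j).preconnected hrestconn.preconnected huj
      (by simp [hvi, hvB]) hvu.symm
  · exact (min_le_right _ _).trans_lt hjB
  · rw [Finset.card_union_of_disjoint (hdisj.symm.mono_right Finset.sdiff_subset),
      Finset.card_sdiff_of_subset hBi]
    exact (min_le_right _ _).trans_lt (by omega)

/-- If `v` is not satisfied with respect to a connected `k`-partition `C` of a tree `T`,
then there is a connected `k`-partition `C'` whose size tuple is lexicographically
strictly larger. -/
theorem stmt_7 {V : Type*} [Fintype V] [DecidableEq V] (G : SimpleGraph V) [DecidableRel G.Adj]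
    (htree : G.IsTree) {k : ℕ} (hk : 2 ≤ k) (hcard : k ≤ Fintype.card V)
    (C : Fin k → Finset V) (hC : IsConnKPartition G C)
    (v : V) (i : Fin k) (hvi : v ∈ C i) (j : Fin k) (hij : j ≠ i)
    (hunsat : (nbrsIn G (C i) v).card * (C j).card <
      (nbrsIn G (C j) v).card * ((C i).card - 1)) :
    ∃ C' : Fin k → Finset V, IsConnKPartition G C' ∧
      List.Lex (· < ·) (sizeTuple C) (sizeTuple C') :=
  stmt_7_general G htree C hC v i hvi j hij hunsat
end

section
/- Let t and t' be two (k,n)-tuples that differ in exactly two positions and satisfy t < t' lexicographically. Then t' is a 2-change of t, i.e., there exist indices x < y with t[x] + 2 ≤ t[y] and an integer δ with 1 ≤ δ ≤ t[y] − t[x] − 1 such that the entries of t' are exactly the multiset {t[i] : i ≠ x, y} ∪ {t[x] + δ, t[y] − δ}. -/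
/-- A `(k,n)`-tuple: a nondecreasing tuple of `k` nonnegative integers summing to `n`. -/
def IsKNTuple (k n : ℕ) (t : Fin k → ℕ) : Prop :=
  Monotone t ∧ ∑ i, t i = n

/-- `t'` is a 2-change of `t`: there exist indices `x < y` with `t x + 2 ≤ t y` and an
order `δ` with `1 ≤ δ ≤ t y - t x - 1` such that the entries of `t'` are exactly the
multiset `{t i : i ≠ x, y} ∪ {t x + δ, t y - δ}`. -/
def IsTwoChange {k : ℕ} (t t' : Fin k → ℕ) : Prop :=
  ∃ x y : Fin k, x < y ∧ t x + 2 ≤ t y ∧ ∃ δ : ℕ, 1 ≤ δ ∧ δ ≤ t y - t x - 1 ∧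
    Multiset.map t' (Finset.univ : Finset (Fin k)).val =
      Multiset.map t (((Finset.univ : Finset (Fin k)).erase x).erase y).val
        + {t x + δ, t y - δ}

/-- If two `(k,n)`-tuples `t < t'` differ in exactly two positions,
then `t'` is a 2-change of `t`. -/
theorem stmt_9 {k : ℕ} (n : ℕ) (hk : 0 < k) (hn : 0 < n) (t t' : Fin k → ℕ)
    (ht : IsKNTuple k n t) (ht' : IsKNTuple k n t')
    (hdiff : ((Finset.univ : Finset (Fin k)).filter (fun i => t i ≠ t' i)).card = 2)
    (hlex : ∃ j : Fin k, t j < t' j ∧ ∀ i < j, t i = t' i) :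
    IsTwoChange t t' := by
  obtain ⟨hmt, hst⟩ := ht
  obtain ⟨hmt', hst'⟩ := ht'
  obtain ⟨a, b, hab, hfab⟩ := Finset.card_eq_two.mp hdiff
  obtain ⟨j, hj1, hj2⟩ := hlex
  have hjf : j ∈ ({a, b} : Finset (Fin k)) := by
    rw [← hfab]; simp [hj1.ne]
  set y : Fin k := if j = a then b else a with hy
  have hyj : y ≠ j := by
    rcases Finset.mem_insert.mp hjf with h | h
    · simp [hy, h, Ne.symm hab]
    · simp only [Finset.mem_singleton] at h
      by_cases hja : j = a
      · simp [hy, hja, Ne.symm hab]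
      · simp only [hy, if_neg hja]
        exact fun e => hja e.symm
  have hset : ({a, b} : Finset (Fin k)) = {j, y} := by
    rcases Finset.mem_insert.mp hjf with h | h
    · simp [hy, ← h]
    · simp only [Finset.mem_singleton] at h
      have hja : j ≠ a := fun e => hab (e ▸ h)
      subst h
      simp [hy, hja, Finset.pair_comm]
  have hoff : ∀ i : Fin k, i ≠ j → i ≠ y → t i = t' i := by
    intro i hi1 hi2
    by_contra hne
    have : i ∈ ({a, b} : Finset (Fin k)) := by
      rw [← hfab]; simp [hne]
    rw [hset] at this
    rcases Finset.mem_insert.mp this with h | h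
    · exact hi1 h
    · exact hi2 (Finset.mem_singleton.mp h)
  have hyne : t y ≠ t' y := by
    have : y ∈ ({a, b} : Finset (Fin k)) := by
      rw [hset]; simp
    rw [← hfab] at this
    simpa using (Finset.mem_filter.mp this).2
  have hjy : j < y := by
    rcases lt_trichotomy j y with h | h | h
    · exact h
    · exact absurd h.symm hyj
    · exact absurd (hj2 y h) hyne
  -- sum equality on the two positions
  have hymem : y ∈ (Finset.univ : Finset (Fin k)).erase j := by
    simp [hyj]
  have hsum1 : ∑ i, t i = t j + (t y + ∑ i ∈ ((Finset.univ : Finset (Fin k)).erase j).erase y, t i) := by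
    rw [Finset.add_sum_erase _ t hymem, Finset.add_sum_erase _ t (Finset.mem_univ j)]
  have hsum2 : ∑ i, t' i = t' j + (t' y + ∑ i ∈ ((Finset.univ : Finset (Fin k)).erase j).erase y, t' i) := by
    rw [Finset.add_sum_erase _ t' hymem, Finset.add_sum_erase _ t' (Finset.mem_univ j)]
  have hrest : ∑ i ∈ ((Finset.univ : Finset (Fin k)).erase j).erase y, t i
      = ∑ i ∈ ((Finset.univ : Finset (Fin k)).erase j).erase y, t' i := by
    apply Finset.sum_congr rfl
    intro i hi
    rw [Finset.mem_erase, Finset.mem_erase] at hi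
    exact hoff i hi.2.1 hi.1
  have hkey : t j + t y = t' j + t' y := by
    have := hsum1.symm.trans (hst.trans (hst'.symm.trans hsum2))
    omega
  have hmon' : t' j ≤ t' y := hmt' hjy.le
  set δ : ℕ := t' j - t j with hδ
  have hδ1 : 1 ≤ δ := by omega
  have htj' : t' j = t j + δ := by omega
  have hty' : t' y = t y - δ := by omega
  have h2 : t j + 2 * δ ≤ t y := by omega
  refine ⟨j, y, hjy, by omega, δ, hδ1, by omega, ?_⟩
  have hmapcongr : Multiset.map t' (((Finset.univ : Finset (Fin k)).erase j).erase y).val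
      = Multiset.map t (((Finset.univ : Finset (Fin k)).erase j).erase y).val := by
    apply Multiset.map_congr rfl
    intro i hi
    have hi' : i ∈ ((Finset.univ : Finset (Fin k)).erase j).erase y := hi
    rw [Finset.mem_erase, Finset.mem_erase] at hi'
    exact (hoff i hi'.2.1 hi'.1).symm
  have huniv : (Finset.univ : Finset (Fin k)).val
      = j ::ₘ y ::ₘ (((Finset.univ : Finset (Fin k)).erase j).erase y).val := by
    rw [Finset.erase_val, Finset.erase_val]
    rw [Multiset.cons_erase (show y ∈ (Finset.univ : Finset (Fin k)).val.erase j by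
      rw [← Finset.erase_val]; exact hymem)]
    rw [Multiset.cons_erase (Finset.mem_univ j)]
  rw [huniv, Multiset.map_cons, Multiset.map_cons, hmapcongr, ← htj', ← hty']
  show t' j ::ₘ t' y ::ₘ _ = _ + (t' j ::ₘ {t' y})
  rw [add_comm, Multiset.cons_add, Multiset.singleton_add]
end

section
/- Let t be a (k,n)-tuple and let t' be a 2-change of t. Then for every j ∈ {1,…,k}, the sum of the first j entries of t is at most the sum of the first j entries of t', i.e., w_j(t) ≤ w_j(t'). -/
/-- `w_j(t)`: the sum of the first `j` entries of `t`. -/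
def w {k : ℕ} (j : ℕ) (t : Fin k → ℕ) : ℕ :=
  ∑ i ∈ (Finset.univ : Finset (Fin k)).filter (fun i : Fin k => (i : ℕ) < j), t i

/-- If `t'` is a 2-change of a `(k,n)`-tuple `t`, then `w_j(t) ≤ w_j(t')` for every
`j ∈ {1,…,k}`. -/
theorem stmt_10 {k : ℕ} (n : ℕ) (hk : 0 < k) (hn : 0 < n) (t t' : Fin k → ℕ)
    (ht : IsKNTuple k n t) (ht' : IsKNTuple k n t')
    (hchg : IsTwoChange t t')
    (j : ℕ) (hj1 : 1 ≤ j) (hjk : j ≤ k) :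
    w j t ≤ w j t' := by
  obtain ⟨hmt, -⟩ := ht
  obtain ⟨x, y, hxy, hab, δ, hδ1, hδ2, heq⟩ := hchg
  set F : Finset (Fin k) := Finset.univ.filter (fun i : Fin k => (i : ℕ) < j) with hF
  have hj1k : j - 1 < k := by omega
  set p : Fin k := ⟨j - 1, hj1k⟩ with hp
  set m := t p with hm
  -- card of F
  have hcard : F.card = j := by
    have hFmap : F = Finset.map (Fin.castLEEmb hjk) Finset.univ := by
      ext i
      simp only [hF, Finset.mem_filter, Finset.mem_univ, true_and, Finset.mem_map,
        Fin.castLEEmb_apply]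
      constructor
      · intro hi
        exact ⟨⟨(i : ℕ), hi⟩, by ext; simp⟩
      · rintro ⟨a, rfl⟩
        exact a.isLt
    rw [hFmap, Finset.card_map, Finset.card_univ, Fintype.card_fin]
  -- key equality for t
  have h1 : w j t + ∑ i, (m - t i) = j * m := by
    have hzero : ∑ i, (m - t i) = ∑ i ∈ F, (m - t i) := by
      refine (Finset.sum_subset (Finset.subset_univ F) ?_).symm
      intro i _ hiF
      have hij : ¬ ((i : ℕ) < j) := by
        simpa [hF] using hiF
      have : m ≤ t i := hmt (show p ≤ i by simp [hp, Fin.le_def]; omega)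
      omega
    rw [w, ← hF, hzero, ← Finset.sum_add_distrib]
    have : ∀ i ∈ F, t i + (m - t i) = m := by
      intro i hi
      have hij : (i : ℕ) < j := by simpa [hF] using hi
      have : t i ≤ m := hmt (show i ≤ p by simp [hp, Fin.le_def]; omega)
      omega
    rw [Finset.sum_congr rfl this, Finset.sum_const, hcard, smul_eq_mul]
  -- key inequality for t'
  have h2 : j * m ≤ w j t' + ∑ i, (m - t' i) := by
    have hsub : ∑ i ∈ F, (m - t' i) ≤ ∑ i, (m - t' i) :=
      Finset.sum_le_sum_of_subset (Finset.subset_univ F)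
    have : j * m ≤ ∑ i ∈ F, (t' i + (m - t' i)) := by
      calc j * m = ∑ _i ∈ F, m := by rw [Finset.sum_const, hcard, smul_eq_mul]
        _ ≤ ∑ i ∈ F, (t' i + (m - t' i)) := Finset.sum_le_sum (fun i _ => by omega)
    rw [Finset.sum_add_distrib] at this
    rw [w, ← hF]
    omega
  -- comparison of the penalty sums via the multiset equation
  have h3 : ∑ i, (m - t' i) ≤ ∑ i, (m - t i) := by
    have hy' : y ∈ Finset.univ.erase x := by
      simp [Finset.mem_erase, (Finset.mem_univ y), hxy.ne']
    have hsum : ∀ u : Fin k → ℕ,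
        ∑ i, (m - u i) = (((Finset.univ : Finset (Fin k)).val.map u).map (m - ·)).sum := by
      intro u
      rw [Multiset.map_map, Finset.sum]
      rfl
    rw [hsum t', hsum t, heq]
    have hdecomp : ((Finset.univ : Finset (Fin k)).val.map t) =
        Multiset.map t ((((Finset.univ : Finset (Fin k)).erase x).erase y).val) + {t x, t y} := by
      simp only [Finset.erase_val]
      have hx : x ∈ (Finset.univ : Finset (Fin k)).val := by simp
      have hy2 : y ∈ (Finset.univ : Finset (Fin k)).val.erase x :=
        (Multiset.mem_erase_of_ne hxy.ne').2 (by simp)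
      conv_lhs => rw [← Multiset.cons_erase hx, ← Multiset.cons_erase hy2]
      simp only [Multiset.map_cons]
      rw [show ({t x, t y} : Multiset ℕ) = {t x} + {t y} from rfl,
        ← Multiset.singleton_add, ← Multiset.singleton_add]
      abel
    rw [hdecomp]
    simp only [Multiset.map_add, Multiset.sum_add]
    have hpair : ((({t x + δ, t y - δ} : Multiset ℕ)).map (m - ·)).sum ≤
        ((({t x, t y} : Multiset ℕ)).map (m - ·)).sum := by
      simp only [Multiset.insert_eq_cons, Multiset.map_cons, Multiset.map_singleton,
        Multiset.sum_cons, Multiset.sum_singleton]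
      omega
    omega
  omega
end

section
/- Let k and n be positive integers and let t_1, t_2, …, t_ℓ be a sequence of (k,n)-tuples such that for every index i with 2 ≤ i ≤ ℓ, the tuple t_i is a 2-change of t_{i−1}. Then ℓ ≤ 1 + (k+1)·n/2 (equivalently, 2·(ℓ − 1) ≤ (k+1)·n). -/
/-- symmetric "distance" on ℕ, omega-friendly. -/
def dd (a b : ℕ) : ℕ := (a - b) + (b - a)

/-- sum of dd over all ordered pairs of a multiset. -/
def DD (M : Multiset ℕ) : ℕ := (M.bind fun a => M.map fun b => dd a b).sum

lemma DD_cons_cons (a b : ℕ) (M : Multiset ℕ) :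
    DD (a ::ₘ b ::ₘ M) =
      DD M + 2 * (M.map fun c => dd a c + dd b c).sum + 2 * dd a b := by
  have hsym : ∀ u v : ℕ, dd u v = dd v u := by intro u v; unfold dd; omega
  unfold DD
  rw [Multiset.sum_bind, Multiset.sum_bind]
  simp only [Multiset.map_cons, Multiset.sum_cons]
  have h1 : (Multiset.map (fun c => (dd c a + (dd c b + (Multiset.map (fun b' => dd c b') M).sum))) M).sum
      = (Multiset.map (fun c => dd c a) M).sum + (Multiset.map (fun c => dd c b) M).sum
        + (Multiset.map (fun c => (Multiset.map (fun b' => dd c b') M).sum) M).sum := by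
    rw [show (fun c => (dd c a + (dd c b + (Multiset.map (fun b' => dd c b') M).sum)))
        = (fun c => dd c a + (dd c b + (Multiset.map (fun b' => dd c b') M).sum)) from rfl]
    rw [Multiset.sum_map_add, Multiset.sum_map_add]
    ring
  rw [h1]
  have h2 : (Multiset.map (fun c => dd c a) M) = (Multiset.map (fun c => dd a c) M) := by
    apply Multiset.map_congr rfl; intro c _; exact hsym c a
  have h3 : (Multiset.map (fun c => dd c b) M) = (Multiset.map (fun c => dd b c) M) := by
    apply Multiset.map_congr rfl; intro c _; exact hsym c b
  rw [h2, h3, Multiset.sum_map_add]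
  have hda : dd a a = 0 := by unfold dd; omega
  have hdb : dd b b = 0 := by unfold dd; omega
  rw [hda, hdb, hsym b a]
  ring

lemma DD_le (M : Multiset ℕ) : DD M ≤ 2 * Multiset.card M * M.sum := by
  unfold DD
  rw [Multiset.sum_bind]
  calc (Multiset.map (fun a => (Multiset.map (fun b => dd a b) M).sum) M).sum
      ≤ (Multiset.map (fun a => Multiset.card M * a + M.sum) M).sum := by
        apply Multiset.sum_map_le_sum_map
        intro a _
        calc (Multiset.map (fun b => dd a b) M).sum
            ≤ (Multiset.map (fun b => a + b) M).sum := by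
              apply Multiset.sum_map_le_sum_map
              intro b _; unfold dd; omega
          _ = Multiset.card M * a + M.sum := by
              rw [Multiset.sum_map_add, Multiset.map_const', Multiset.sum_replicate,
                Multiset.map_id', smul_eq_mul]
    _ = 2 * Multiset.card M * M.sum := by
        rw [Multiset.sum_map_add, Multiset.sum_map_mul_left, Multiset.map_id',
          Multiset.map_const', Multiset.sum_replicate, smul_eq_mul]
        ring

lemma step_lemma {k : ℕ} (t t' : Fin k → ℕ) (h : IsTwoChange t t') :
    DD (Multiset.map t' Finset.univ.val) + 4 ≤ DD (Multiset.map t Finset.univ.val) := by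
  obtain ⟨x, y, hxy, hgap, δ, hδ1, hδ2, hmul⟩ := h
  have hyx : y ≠ x := (ne_of_lt hxy).symm
  set M₀ := Multiset.map t (((Finset.univ : Finset (Fin k)).erase x).erase y).val with hM₀
  have hval : (Finset.univ : Finset (Fin k)).val
      = x ::ₘ y ::ₘ (((Finset.univ : Finset (Fin k)).erase x).erase y).val := by
    rw [Finset.erase_val, Finset.erase_val]
    rw [Multiset.cons_erase ((Multiset.mem_erase_of_ne hyx).mpr (Finset.mem_univ_val y))]
    rw [Multiset.cons_erase (Finset.mem_univ_val x)]
  have hM : Multiset.map t Finset.univ.val = t x ::ₘ t y ::ₘ M₀ := by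
    rw [hval, Multiset.map_cons, Multiset.map_cons, hM₀]
  have hM' : Multiset.map t' Finset.univ.val = (t x + δ) ::ₘ (t y - δ) ::ₘ M₀ := by
    rw [hmul, add_comm]
    rw [show ({t x + δ, t y - δ} : Multiset ℕ) = (t x + δ) ::ₘ (t y - δ) ::ₘ 0 from rfl]
    rw [Multiset.cons_add, Multiset.cons_add, zero_add]
  rw [hM, hM', DD_cons_cons, DD_cons_cons]
  have key1 : (M₀.map fun c => dd (t x + δ) c + dd (t y - δ) c).sum
      ≤ (M₀.map fun c => dd (t x) c + dd (t y) c).sum := by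
    apply Multiset.sum_map_le_sum_map
    intro c _; unfold dd; omega
  have key2 : dd (t x + δ) (t y - δ) + 2 ≤ dd (t x) (t y) := by unfold dd; omega
  omega


/-- If `t 1, …, t ℓ` is a sequence of `(k,n)`-tuples in which each tuple is a 2-change of
the previous one, then `ℓ ≤ 1 + (k+1)·n/2`, i.e. `2·(ℓ - 1) ≤ (k+1)·n`. -/
theorem stmt_12 {k : ℕ} (n : ℕ) (hk : 0 < k) (hn : 0 < n) (ℓ : ℕ)
    (t : ℕ → Fin k → ℕ)
    (htuple : ∀ i, 1 ≤ i → i ≤ ℓ → IsKNTuple k n (t i))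
    (hchg : ∀ i, 2 ≤ i → i ≤ ℓ → IsTwoChange (t (i - 1)) (t i)) :
    2 * (ℓ - 1) ≤ (k + 1) * n := by
  rcases Nat.lt_or_ge ℓ 1 with hℓ | hℓ
  · interval_cases ℓ; simp
  · set S : ℕ → ℕ := fun i => DD (Multiset.map (t i) Finset.univ.val) with hS
    have chain : ∀ j, 1 ≤ j → j ≤ ℓ → S j + 4 * (j - 1) ≤ S 1 := by
      intro j
      induction j with
      | zero => omega
      | succ m ih =>
        intro h1 h2
        rcases Nat.eq_or_lt_of_le h1 with he | hlt
        · rw [← he]; omega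
        · have hm1 : 1 ≤ m := by omega
          have hc := ih hm1 (by omega)
          have hstep := step_lemma _ _ (hchg (m + 1) (by omega) h2)
          rw [Nat.add_sub_cancel] at hstep
          have hstep' : S (m + 1) + 4 ≤ S m := hstep
          omega
    have h1 := chain ℓ hℓ le_rfl
    have hb : S 1 ≤ 2 * k * n := by
      have ht := htuple 1 le_rfl hℓ
      have hcard : Multiset.card (Multiset.map (t 1) Finset.univ.val) = k := by simp
      have hsum : (Multiset.map (t 1) Finset.univ.val).sum = n := by
        rw [← Finset.sum_eq_multiset_sum]; exact ht.2
      have hd := DD_le (Multiset.map (t 1) Finset.univ.val)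
      rw [hcard, hsum] at hd
      exact hd
    rw [mul_assoc] at hb
    have h2 : 2 * (ℓ - 1) ≤ k * n := by omega
    calc 2 * (ℓ - 1) ≤ k * n := h2
      _ ≤ (k + 1) * n := Nat.mul_le_mul_right n (by omega)
end

section
/- Let k ≥ 2 be an integer. A finite tree T admits a k-community structure if and only if T contains a matching of size k. Moreover, when it exists, a connected k-community structure of T exists. -/
/-!
If `C` is a community structure, a vertex `v` of a part `C i` with a neighbour in another part
`C j` also has one in `C i`, by the defining inequality; as the tree is connected, every part
therefore contains an edge, and these edges form a matching.

Conversely, the `k` edges of a matching are disjoint connected sets, and growing them one vertex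
at a time yields a partition of the tree into `k` connected parts of size at least two. Take such
a partition minimising `∑ |C i|²`. In a tree a vertex `v ∉ C j` has at most one neighbour in the
connected set `C j`. If the inequality failed at `v ∈ C i`, then `|N_{C i}(v)| |C j| < |C i| - 1`,
so some component `A` of `C i - v` has more than `|C j|` vertices; moving `C i \ A` into `C j`
keeps all parts connected and strictly decreases `∑ |C i|²`.
-/

open Finset Function

namespace SimpleGraph

variable {V : Type*} (G : SimpleGraph V)

-- Walks of `G` itself rather than of `G.induce s`, to keep membership proofs out of the endpoints.
def ReachIn (s : Finset V) (x y : V) : Prop :=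
  ∃ p : G.Walk x y, ∀ z ∈ p.support, z ∈ s

def PreconnectedOn (s : Finset V) : Prop :=
  ∀ x ∈ s, ∀ y ∈ s, G.ReachIn s x y

variable {G} {s t : Finset V} {v x y z : V}

namespace ReachIn

lemma refl (hx : x ∈ s) : G.ReachIn s x x :=
  ⟨.nil, by simpa⟩

lemma symm : G.ReachIn s x y → G.ReachIn s y x
  | ⟨p, hp⟩ => ⟨p.reverse, by simpa using hp⟩

lemma trans : G.ReachIn s x y → G.ReachIn s y z → G.ReachIn s x z
  | ⟨p, hp⟩, ⟨q, hq⟩ =>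
    ⟨p.append q, fun w hw => ((Walk.mem_support_append_iff p q).1 hw).elim (hp w) (hq w)⟩

lemma mono (hst : s ⊆ t) : G.ReachIn s x y → G.ReachIn t x y
  | ⟨p, hp⟩ => ⟨p, fun w hw => hst (hp w hw)⟩

lemma mem_left : G.ReachIn s x y → x ∈ s
  | ⟨p, hp⟩ => hp x p.start_mem_support

end ReachIn

lemma Adj.reachIn (h : G.Adj x y) (hx : x ∈ s) (hy : y ∈ s) : G.ReachIn s x y :=
  ⟨h.toWalk, by simp [hx, hy]⟩

lemma Walk.reachIn_of_mem_support [DecidableEq V] {p : G.Walk x y} (hp : ∀ w ∈ p.support, w ∈ s)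
    (hz : z ∈ p.support) : G.ReachIn s x z ∧ G.ReachIn s z y :=
  ⟨⟨p.takeUntil z hz, fun w hw => hp w (p.support_takeUntil_subset_support hz hw)⟩,
    ⟨p.dropUntil z hz, fun w hw => hp w (p.support_dropUntil_subset_support hz hw)⟩⟩

lemma ReachIn.exists_adj_reachIn_erase [DecidableEq V] (h : G.ReachIn s v x) (hx : x ≠ v) :
    ∃ y, G.Adj v y ∧ G.ReachIn (s.erase v) y x := by
  obtain ⟨p, hp⟩ := h
  obtain ⟨q, hq, hqs⟩ : ∃ q : G.Walk v x, q.IsPath ∧ ∀ w ∈ q.support, w ∈ s :=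
    ⟨p.bypass, p.bypass_isPath, fun w hw => hp w (p.support_bypass_subset_support hw)⟩
  cases q with
  | nil => exact absurd rfl hx
  | cons hvy q =>
    obtain ⟨-, hvq⟩ := (Walk.cons_isPath_iff hvy q).1 hq
    refine ⟨_, hvy, q, fun w hw => mem_erase.2 ⟨?_, hqs w (by simp [hw])⟩⟩
    rintro rfl
    exact hvq hw

lemma preconnectedOn_of_forall_reachIn (h : ∀ x ∈ s, G.ReachIn s x v) : G.PreconnectedOn s :=
  fun x hx y hy => (h x hx).trans (h y hy).symm

lemma preconnectedOn_singleton (v : V) : G.PreconnectedOn {v} :=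
  preconnectedOn_of_forall_reachIn fun x hx => by
    rw [mem_singleton.1 hx]
    exact .refl (mem_singleton_self v)

lemma PreconnectedOn.union_of_adj [DecidableEq V] (hs : G.PreconnectedOn s)
    (ht : G.PreconnectedOn t) (hx : x ∈ s) (hy : y ∈ t) (hxy : G.Adj x y) :
    G.PreconnectedOn (s ∪ t) :=
  preconnectedOn_of_forall_reachIn fun z hz => by
    rcases mem_union.1 hz with hz | hz
    · exact (hs z hz x hx).mono subset_union_left
    · exact ((ht z hz y hy).mono subset_union_right).trans
        (hxy.symm.reachIn (mem_union_right _ hy) (mem_union_left _ hx))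

lemma PreconnectedOn.insert [DecidableEq V] (hs : G.PreconnectedOn s) (hy : y ∈ s)
    (hxy : G.Adj x y) : G.PreconnectedOn (insert x s) := by
  rw [insert_eq]
  exact (preconnectedOn_singleton x).union_of_adj hs (mem_singleton_self x) hy hxy

lemma preconnectedOn_pair [DecidableEq V] (hxy : G.Adj x y) : G.PreconnectedOn {x, y} :=
  (preconnectedOn_singleton y).insert (mem_singleton_self y) hxy

lemma PreconnectedOn.induce_connected (hs : G.PreconnectedOn s) (hne : s.Nonempty) :
    (G.induce (s : Set V)).Connected := by
  have : Nonempty (s : Set V) := hne.coe_sort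
  refine (connected_iff _).2 ⟨?_, this⟩
  rintro ⟨x, hx⟩ ⟨y, hy⟩
  obtain ⟨p, hp⟩ := hs x hx y hy
  exact (p.induce (s : Set V) hp).reachable

lemma preconnectedOn_filter_reachIn [DecidableEq V] [DecidablePred (G.ReachIn s y)] :
    G.PreconnectedOn (s.filter (G.ReachIn s y)) := by
  refine preconnectedOn_of_forall_reachIn (v := y) fun x hx => ReachIn.symm ?_
  obtain ⟨p, hp⟩ := (mem_filter.1 hx).2
  exact ⟨p, fun w hw => mem_filter.2 ⟨hp w hw, (p.reachIn_of_mem_support hp hw).1⟩⟩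

section Neighbours

variable [DecidableEq V] [DecidableRel G.Adj]

lemma IsAcyclic.card_nbrsIn_le_one_s14 (hG : G.IsAcyclic) (hs : G.PreconnectedOn s) (hv : v ∉ s) :
    #(nbrsIn G s v) ≤ 1 := by
  refine card_le_one.2 fun a ha b hb => ?_
  simp only [nbrsIn, mem_filter] at ha hb
  obtain ⟨p, hp⟩ := hs a ha.1 b hb.1
  have hvp : v ∉ p.bypass.support := fun h => hv (hp v (p.support_bypass_subset_support h))
  have hpath := (Walk.cons_isPath_iff ha.2 _).2 ⟨p.bypass_isPath, hvp⟩
  simpa using (hG.eq_snd_of_adj_start hpath hb.2 (by simp)).symm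

/-- The pieces of `s.erase v` are its `G.ReachIn (s.erase v)`-classes, each containing a
neighbour of `v`; `A` is a largest one. -/
lemma PreconnectedOn.exists_split (hs : G.PreconnectedOn s) (hv : v ∈ s) :
    ∃ A ⊆ s.erase v, G.PreconnectedOn A ∧ G.PreconnectedOn (s \ A) ∧
      #s - 1 ≤ #(nbrsIn G s v) * #A := by
  classical
  set E := s.erase v
  set N := nbrsIn G s v
  let K : V → Finset V := fun y => E.filter (G.ReachIn E y)
  have hcover : ∀ x ∈ E, ∃ y ∈ N, G.ReachIn E y x := by
    intro x hx
    obtain ⟨y, hvy, hyx⟩ :=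
      (hs v hv x (mem_of_mem_erase hx)).exists_adj_reachIn_erase (ne_of_mem_erase hx)
    exact ⟨y, mem_filter.2 ⟨mem_of_mem_erase hyx.mem_left, hvy⟩, hyx⟩
  have hEK : #E ≤ #(N.biUnion K) := card_le_card fun x hx =>
    let ⟨y, hy, hyx⟩ := hcover x hx
    mem_biUnion.2 ⟨y, hy, mem_filter.2 ⟨hx, hyx⟩⟩
  have hEs : #E = #s - 1 := card_erase_of_mem hv
  rcases N.eq_empty_or_nonempty with hN | hN
  · refine ⟨∅, empty_subset _, fun x hx => absurd hx (notMem_empty x), by simpa using hs, ?_⟩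
    rw [hN, biUnion_empty, card_empty] at hEK
    rw [card_empty, mul_zero]
    omega
  obtain ⟨y₀, hy₀, hmax⟩ := exists_max_image N (fun y => #(K y)) hN
  have hvA : v ∉ K y₀ := fun h => (mem_erase.1 (mem_of_mem_filter v h)).1 rfl
  refine ⟨K y₀, filter_subset _ _, preconnectedOn_filter_reachIn, ?_, ?_⟩
  · refine preconnectedOn_of_forall_reachIn (v := v) fun x hx => ?_
    obtain ⟨hxs, hxA⟩ := mem_sdiff.1 hx
    by_cases hxv : x = v
    · subst hxv
      exact .refl (mem_sdiff.2 ⟨hv, hvA⟩)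
    have hxE : x ∈ E := mem_erase.2 ⟨hxv, hxs⟩
    obtain ⟨y, hy, p, hp⟩ := hcover x hxE
    -- `K y₀` is closed under `G.ReachIn E`, so the walk from `y` to `x ∉ K y₀` avoids it.
    have hpA : ∀ w ∈ p.support, w ∈ s \ K y₀ := fun w hw => mem_sdiff.2
      ⟨mem_of_mem_erase (hp w hw), fun hwA => hxA (mem_filter.2
        ⟨hxE, (mem_filter.1 hwA).2.trans (p.reachIn_of_mem_support hp hw).2⟩)⟩
    have hvy : G.Adj v y := (mem_filter.1 hy).2
    exact (ReachIn.symm ⟨p, hpA⟩).trans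
      (hvy.symm.reachIn (hpA y p.start_mem_support) (mem_sdiff.2 ⟨hv, hvA⟩))
  · calc #s - 1 = #E := hEs.symm
      _ ≤ #(N.biUnion K) := hEK
      _ ≤ #N * #(K y₀) := card_biUnion_le_card_mul _ _ _ hmax

end Neighbours

end SimpleGraph

section Labelling

variable {V ι : Type*} [Fintype V] [DecidableEq ι]

def fiber (f : V → ι) (i : ι) : Finset V := {v | f v = i}

@[simp] lemma mem_fiber {f : V → ι} {i : ι} {v : V} : v ∈ fiber f i ↔ f v = i := by
  simp [fiber]

lemma fiber_ite [DecidableEq V] (f : V → ι) (X : Finset V) (j l : ι) :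
    fiber (fun v => if v ∈ X then j else f v) l =
      if l = j then fiber f l ∪ X else fiber f l \ X := by
  ext v
  split_ifs with hl <;> by_cases hv : v ∈ X <;>
    simp only [mem_fiber, mem_union, mem_sdiff, hv] <;> grind

lemma disjoint_fiber {f : V → ι} {i j : ι} (hij : i ≠ j) : Disjoint (fiber f i) (fiber f j) :=
  disjoint_left.2 fun _ hi hj => hij ((mem_fiber.1 hi).symm.trans (mem_fiber.1 hj))

lemma exists_fiber_eq {C : ι → Finset V} (hdisj : Pairwise (Disjoint on C))
    (hcov : ∀ v, ∃ i, v ∈ C i) : ∃ f : V → ι, ∀ i, fiber f i = C i := by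
  choose f hf using hcov
  refine ⟨f, fun i => ext fun v => ⟨fun h => mem_fiber.1 h ▸ hf v, fun hv => ?_⟩⟩
  by_contra hne
  exact disjoint_left.1 (hdisj (mt mem_fiber.2 hne)) (hf v) hv

end Labelling

lemma Fintype.sum_lt_sum_of_eq_off_pair {ι M : Type*} [Fintype ι] [DecidableEq ι]
    [AddCommMonoid M] [PartialOrder M] [IsOrderedCancelAddMonoid M] {g g' : ι → M} {i j : ι}
    (hij : i ≠ j) (hoff : ∀ l, l ≠ i → l ≠ j → g' l = g l) (hlt : g' i + g' j < g i + g j) :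
    ∑ l, g' l < ∑ l, g l := by
  have hsplit : ∀ h : ι → M, ∑ l, h l = h i + h j + ∑ l ∈ (univ.erase i).erase j, h l := by
    intro h
    rw [← add_sum_erase _ _ (mem_univ i), ← add_sum_erase _ _ (mem_erase.2 ⟨hij.symm, mem_univ j⟩),
      add_assoc]
  rw [hsplit g', hsplit g]
  exact add_lt_add_of_lt_of_le hlt (sum_le_sum fun l hl =>
    (hoff l (ne_of_mem_erase (mem_of_mem_erase hl)) (ne_of_mem_erase hl)).le)

namespace SimpleGraph

variable {V ι : Type*} [Fintype V] [DecidableEq V] {G : SimpleGraph V} [Fintype ι] [DecidableEq ι]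

variable (G) in
def ConnectedParts (C : ι → Finset V) : Prop :=
  ∀ i, 2 ≤ #(C i) ∧ G.PreconnectedOn (C i)

lemma Connected.exists_cover_connectedParts [Nonempty ι] (hG : G.Connected) {C : ι → Finset V}
    (hC : G.ConnectedParts C) (hdisj : Pairwise (Disjoint on C)) :
    ∃ D : ι → Finset V, G.ConnectedParts D ∧ Pairwise (Disjoint on D) ∧ ∀ v, ∃ i, v ∈ D i := by
  classical
  obtain ⟨D, hD, hmax⟩ := exists_max_image
    {D : ι → Finset V | G.ConnectedParts D ∧ Pairwise (Disjoint on D)} (fun D => ∑ i, #(D i))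
    ⟨C, by simp [hC, hdisj]⟩
  simp only [mem_filter, mem_univ, true_and] at hD hmax
  refine ⟨D, hD.1, hD.2, ?_⟩
  by_contra! ⟨u, hu⟩
  obtain ⟨i₀⟩ := ‹Nonempty ι›
  obtain ⟨w, hw⟩ := card_pos.1 (show 0 < #(D i₀) by have := (hD.1 i₀).1; omega)
  obtain ⟨d, -, ⟨i, hi⟩, hd⟩ := (hG.preconnected w u).some.exists_boundary_dart
    {x | ∃ i, x ∈ D i} ⟨i₀, hw⟩ (by simpa using hu)
  simp only [Set.mem_ofPred_eq, not_exists] at hd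
  obtain ⟨D', hD'i, hD'l⟩ : ∃ D' : ι → Finset V,
      D' i = insert d.toProd.2 (D i) ∧ ∀ l, l ≠ i → D' l = D l :=
    ⟨update D i _, update_self .., fun l hl => update_of_ne hl ..⟩
  have hnew : ∀ l, l ≠ i → Disjoint (D' i) (D' l) := fun l hl => by
    rw [hD'i, hD'l l hl]
    exact disjoint_insert_left.2 ⟨hd l, hD.2 hl.symm⟩
  have hD' : G.ConnectedParts D' ∧ Pairwise (Disjoint on D') := by
    refine ⟨fun l => ?_, fun l l' hll' => ?_⟩
    · rcases eq_or_ne l i with rfl | hl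
      · rw [hD'i]
        exact ⟨(hD.1 l).1.trans (card_le_card (subset_insert _ _)),
          (hD.1 l).2.insert hi d.adj.symm⟩
      · rw [hD'l l hl]
        exact hD.1 l
    · rcases eq_or_ne l i with rfl | hl
      · exact hnew l' hll'.symm
      rcases eq_or_ne l' i with rfl | hl'
      · exact (hnew l hll').symm
      rw [onFun, hD'l l hl, hD'l l' hl']
      exact hD.2 hll'
  refine (hmax D' hD').not_gt (sum_lt_sum (fun l _ => ?_) ⟨i, mem_univ i, ?_⟩)
  · rcases eq_or_ne l i with rfl | hl
    · rw [hD'i]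
      exact card_le_card (subset_insert _ _)
    · rw [hD'l l hl]
  · rw [hD'i]
    exact card_lt_card (ssubset_insert (hd i))

variable [DecidableRel G.Adj]

lemma ConnectedParts.exists_lt_sum_sq {f : V → ι} (hf : G.ConnectedParts (fiber f))
    {i j : ι} {v w : V} (hij : i ≠ j) (hv : f v = i) (hw : f w = j) (hvw : G.Adj v w)
    (hlt : #(nbrsIn G (fiber f i) v) * #(fiber f j) < #(fiber f i) - 1) :
    ∃ g : V → ι, G.ConnectedParts (fiber g) ∧
      ∑ l, #(fiber g l) ^ 2 < ∑ l, #(fiber f l) ^ 2 := by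
  have hvi : v ∈ fiber f i := mem_fiber.2 hv
  obtain ⟨A, hAE, hA, hX, hcard⟩ := (hf i).2.exists_split hvi
  set X := fiber f i \ A
  have hAi : A ⊆ fiber f i := hAE.trans (erase_subset v _)
  have hvX : v ∈ X := mem_sdiff.2 ⟨hvi, fun h => (mem_erase.1 (hAE h)).1 rfl⟩
  have hXi : X ⊆ fiber f i := sdiff_subset
  have hjA : #(fiber f j) < #A := lt_of_mul_lt_mul_left (hlt.trans_le hcard) (Nat.zero_le _)
  obtain ⟨g, hg⟩ : ∃ g : V → ι, ∀ l, fiber g l =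
      if l = j then fiber f l ∪ X else fiber f l \ X := ⟨_, fiber_ite f X j⟩
  have hgi : fiber g i = A := by rw [hg, if_neg hij, Finset.sdiff_sdiff_eq_self hAi]
  have hgj : fiber g j = fiber f j ∪ X := by rw [hg, if_pos rfl]
  have hgl : ∀ l, l ≠ i → l ≠ j → fiber g l = fiber f l := fun l hli hlj => by
    rw [hg, if_neg hlj, sdiff_eq_self_of_disjoint ((disjoint_fiber hli).mono_right hXi)]
  refine ⟨g, fun l => ?_, ?_⟩
  · rcases eq_or_ne l i with rfl | hli
    · rw [hgi]
      exact ⟨by have := (hf j).1; omega, hA⟩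
    rcases eq_or_ne l j with rfl | hlj
    · rw [hgj]
      exact ⟨(hf l).1.trans (card_le_card subset_union_left),
        (hf l).2.union_of_adj hX (mem_fiber.2 hw) hvX hvw.symm⟩
    rw [hgl l hli hlj]
    exact hf l
  · refine Fintype.sum_lt_sum_of_eq_off_pair hij (fun l hli hlj => by rw [hgl l hli hlj]) ?_
    rw [hgi, hgj, card_union_of_disjoint ((disjoint_fiber hij.symm).mono_right hXi),
      ← card_sdiff_add_card_eq_card hAi]
    have : 0 < #X := card_pos.2 ⟨v, hvX⟩
    nlinarith

theorem IsAcyclic.exists_isKComm_fiber {k : ℕ} (hG : G.IsAcyclic) {f₀ : V → Fin k}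
    (hf₀ : G.ConnectedParts (fiber f₀)) :
    ∃ f : V → Fin k, G.ConnectedParts (fiber f) ∧ IsKComm G (fiber f) := by
  classical
  obtain ⟨f, hf, hmin⟩ := exists_min_image {f : V → Fin k | G.ConnectedParts (fiber f)}
    (fun f => ∑ i, #(fiber f i) ^ 2) ⟨f₀, by simpa⟩
  simp only [mem_filter, mem_univ, true_and] at hf hmin
  refine ⟨f, hf, fun i => (hf i).1, fun i j => disjoint_fiber, fun v => ⟨f v, mem_fiber.2 rfl⟩,
    fun i j hij v hv => ?_⟩
  rw [mem_fiber] at hv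
  have hle := hG.card_nbrsIn_le_one_s14 (hf j).2 (v := v) (by rwa [mem_fiber, hv])
  obtain h0 | h1 : #(nbrsIn G (fiber f j) v) = 0 ∨ #(nbrsIn G (fiber f j) v) = 1 := by omega
  · rw [h0, zero_mul]
    exact Nat.zero_le _
  obtain ⟨w, hw⟩ := card_eq_one.1 h1
  have hwj : w ∈ nbrsIn G (fiber f j) v := hw ▸ mem_singleton_self w
  simp only [nbrsIn, mem_filter, mem_fiber] at hwj
  rw [h1, one_mul]
  by_contra! hlt
  obtain ⟨g, hg, hlt'⟩ := hf.exists_lt_sum_sq hij hv hwj.1 hwj.2 hlt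
  exact (hmin g hg).not_gt hlt'

end SimpleGraph

open SimpleGraph

section Matching

variable {V : Type*} [DecidableEq V] {G : SimpleGraph V}

lemma hasMatchingOfSize_iff {k : ℕ} :
    HasMatchingOfSize G k ↔ ∃ x y : Fin k → V, (∀ i, G.Adj (x i) (y i)) ∧
      Pairwise fun i j => Disjoint ({x i, y i} : Finset V) {x j, y j} := by
  have hmem : ∀ a b z : V, z ∈ ({a, b} : Finset V) ↔ z ∈ s(a, b) := by simp [Sym2.mem_iff]
  constructor
  · rintro ⟨M, hMk, hMG, hMdisj⟩
    let e : Fin k ≃ M := (M.equivFin.trans (finCongr hMk)).symm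
    choose p hp using fun i => (e i : Sym2 V).exists_rep
    refine ⟨fun i => (p i).1, fun i => (p i).2, fun i => ?_, fun i j hij => ?_⟩
    · have := hMG _ (e i).2
      rwa [← hp i] at this
    refine disjoint_left.2 fun z hzi hzj => hMdisj _ (e i).2 _ (e j).2
      (fun h => hij (e.injective (Subtype.ext h))) z ?_ ?_
    · rw [← hp i]
      exact (hmem _ _ _).1 hzi
    · rw [← hp j]
      exact (hmem _ _ _).1 hzj
  · rintro ⟨x, y, hxy, hdisj⟩
    have hinj : Injective fun i => s(x i, y i) := fun i j (hij : s(x i, y i) = s(x j, y j)) => by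
      by_contra hne
      refine disjoint_left.1 (hdisj hne) (mem_insert_self _ _) ((hmem _ _ _).2 ?_)
      rw [← hij]
      exact Sym2.mem_mk_left _ _
    refine ⟨univ.image fun i => s(x i, y i), by rw [card_image_of_injective _ hinj, card_fin],
      ?_, ?_⟩
    · simp only [mem_image, mem_univ, true_and]
      rintro _ ⟨i, rfl⟩
      exact hxy i
    · simp only [mem_image, mem_univ, true_and]
      rintro _ ⟨i, rfl⟩ _ ⟨j, rfl⟩ hne z hzi hzj
      exact disjoint_left.1 (hdisj fun h => hne (by rw [h])) ((hmem _ _ _).2 hzi)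
        ((hmem _ _ _).2 hzj)

end Matching

section Community

variable {V : Type*} [Fintype V] [DecidableEq V] {G : SimpleGraph V} [DecidableRel G.Adj]
  {k : ℕ} {C : Fin k → Finset V}

lemma IsKComm.exists_adj (hG : G.Connected) (hC : IsKComm G C) (i : Fin k) :
    ∃ x ∈ C i, ∃ y ∈ C i, G.Adj x y := by
  obtain ⟨hcard, -, hcov, hineq⟩ := hC
  obtain ⟨v, hv, u, -, hvu⟩ := one_lt_card.1 (hcard i)
  have : Nontrivial V := ⟨⟨v, u, hvu⟩⟩
  obtain ⟨z, hvz⟩ := hG.preconnected.exists_adj_of_nontrivial v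
  obtain ⟨l, hz⟩ := hcov z
  rcases eq_or_ne l i with rfl | hli
  · exact ⟨v, hv, z, hz, hvz⟩
  have hl : 0 < #(nbrsIn G (C l) v) * (#(C i) - 1) :=
    Nat.mul_pos (card_pos.2 ⟨z, mem_filter.2 ⟨hz, hvz⟩⟩) (by have := hcard i; omega)
  obtain ⟨y, hy⟩ := card_pos.1 (Nat.pos_of_mul_pos_right (hl.trans_le (hineq i l hli.symm v hv)))
  exact ⟨v, hv, y, (mem_filter.1 hy).1, (mem_filter.1 hy).2⟩

lemma IsKComm.hasMatchingOfSize (hG : G.Connected) (hC : IsKComm G C) :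
    HasMatchingOfSize G k := by
  choose x hx y hy hxy using hC.exists_adj hG
  exact hasMatchingOfSize_iff.2 ⟨x, y, hxy, fun i j hij => (hC.2.1 i j hij).mono
    (insert_subset (hx i) (singleton_subset_iff.2 (hy i)))
    (insert_subset (hx j) (singleton_subset_iff.2 (hy j)))⟩

lemma SimpleGraph.IsTree.exists_isKComm_connected (hG : G.IsTree) (hk : 0 < k)
    (hm : HasMatchingOfSize G k) :
    ∃ C : Fin k → Finset V, IsKComm G C ∧ ∀ i, (G.induce (C i : Set V)).Connected := by
  have : Nonempty (Fin k) := ⟨⟨0, hk⟩⟩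
  obtain ⟨x, y, hxy, hdisj⟩ := hasMatchingOfSize_iff.1 hm
  obtain ⟨D, hD, hDdisj, hcov⟩ := hG.1.exists_cover_connectedParts (C := fun i => {x i, y i})
    (fun i => ⟨(card_pair (hxy i).ne).ge, preconnectedOn_pair (hxy i)⟩) hdisj
  obtain ⟨f₀, hf₀⟩ := exists_fiber_eq hDdisj hcov
  obtain ⟨f, hf, hC⟩ := hG.2.exists_isKComm_fiber (f₀ := f₀) fun i => hf₀ i ▸ hD i
  exact ⟨fiber f, hC, fun i => (hf i).2.induce_connected (card_pos.1 (by have := (hf i).1; omega))⟩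

end Community

/-- A tree admits a `k`-community structure if and only if it contains a matching of
size `k`; moreover, in that case it admits a connected `k`-community structure. -/
theorem stmt_14 {V : Type*} [Fintype V] [DecidableEq V] (G : SimpleGraph V)
    [DecidableRel G.Adj] (htree : G.IsTree) {k : ℕ} (hk : 2 ≤ k) :
    ((∃ C : Fin k → Finset V, IsKComm G C) ↔ HasMatchingOfSize G k) ∧
    (HasMatchingOfSize G k → ∃ C : Fin k → Finset V, IsKComm G C ∧
      ∀ i, (G.induce (↑(C i) : Set V)).Connected) := by
  have hk₀ : 0 < k := by omega
  refine ⟨⟨fun ⟨C, hC⟩ => hC.hasMatchingOfSize htree.1, fun hm => ?_⟩,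
    htree.exists_isKComm_connected hk₀⟩
  obtain ⟨C, hC, -⟩ := htree.exists_isKComm_connected hk₀ hm
  exact ⟨C, hC⟩
end

section
/- Let k ≥ 2 be an integer and let F = (V,E) be a finite forest with |V| ≥ k. Then F admits a generalized k-community structure. -/
open Finset

theorem Finset.exists_subset_card_eq_mul_sum_le {α : Type*} [DecidableEq α] (s : Finset α)
    (f : α → ℕ) {m : ℕ} (hm : m ≤ #s) :
    ∃ t ⊆ s, #t = m ∧ #s * ∑ x ∈ t, f x ≤ m * ∑ x ∈ s, f x := by
  rcases Nat.eq_zero_or_pos m with rfl | hm0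
  · exact ⟨∅, empty_subset _, card_empty, by simp⟩
  obtain ⟨n, hn⟩ : ∃ n, #s = n + 1 := Nat.exists_eq_add_one.mpr (by omega)
  obtain ⟨m, rfl⟩ : ∃ m', m = m' + 1 := Nat.exists_eq_add_one.mpr hm0
  have hcount : ∀ x ∈ s, #{t ∈ s.powersetCard (m + 1) | x ∈ t} = n.choose m := by
    intro x hx
    simpa [hn] using card_filter_powersetCard_subset {x} s (m + 1) (by simpa) (by simp)
  have hdouble : ∑ t ∈ s.powersetCard (m + 1), ∑ x ∈ t, f x = n.choose m * ∑ x ∈ s, f x := by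
    rw [sum_comm' (t' := s) (s' := fun x => {t ∈ s.powersetCard (m + 1) | x ∈ t}), mul_sum]
    · exact sum_congr rfl fun x hx => by rw [sum_const, hcount x hx, smul_eq_mul]
    · intro t x
      simp only [mem_powersetCard, mem_filter]
      exact ⟨fun h => ⟨⟨h.1, h.2⟩, h.1.1 h.2⟩, fun h => ⟨h.1.1, h.1.2⟩⟩
  obtain ⟨t, ht, hle⟩ := exists_le_of_sum_le (powersetCard_nonempty.mpr hm)
    (f := fun t => #s * ∑ x ∈ t, f x) (g := fun _ => (m + 1) * ∑ x ∈ s, f x) (by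
      rw [← mul_sum, hdouble, sum_const, card_powersetCard, smul_eq_mul, hn, ← mul_assoc,
        Nat.add_one_mul_choose_eq, mul_assoc])
  exact ⟨t, (mem_powersetCard.1 ht).1, (mem_powersetCard.1 ht).2, hle⟩

theorem Fintype.sum_apply_update {ι α M : Type*} [Fintype ι] [DecidableEq ι] [AddCommGroup M]
    (g : α → M) (P : ι → α) (i : ι) (x : α) :
    ∑ l, g (Function.update P i x l) = ∑ l, g (P l) + (g x - g (P i)) := by
  simp_rw [Function.apply_update (fun _ => g), sum_update_of_mem (mem_univ i),
    ← add_sum_erase _ _ (mem_univ i), sdiff_singleton_eq_erase]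
  abel

namespace SimpleGraph

variable {V : Type*}

theorem IsAcyclic.not_reachable_deleteEdges_incidenceSet {G : SimpleGraph V} (hG : G.IsAcyclic)
    {v x y : V} (hx : G.Adj v x) (hy : G.Adj v y) (hxy : x ≠ y) :
    ¬ (G.deleteEdges (G.incidenceSet v)).Reachable x y := by
  intro hreach
  apply isAcyclic_iff_forall_adj_isBridge.mp hG hx
  have hsub : G.deleteEdges (G.incidenceSet v) ≤ G.deleteEdges {s(v, x)} :=
    deleteEdges_anti (by simpa using (G.mk'_mem_incidenceSet_left_iff).mpr hx)
  have hvy : (G.deleteEdges {s(v, x)}).Adj v y := by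
    simpa [deleteEdges_adj, hy] using ⟨hxy.symm, fun _ => (G.ne_of_adj hy).symm⟩
  exact hvy.reachable.trans (hreach.mono hsub).symm

variable (G : SimpleGraph V) [DecidableRel G.Adj]

theorem card_interedges_comm (s t : Finset V) : #(G.interedges s t) = #(G.interedges t s) :=
  have := G.symm
  Rel.card_interedges_comm s t

variable [DecidableEq V]

theorem interedges_union_left (s₁ s₂ t : Finset V) :
    G.interedges (s₁ ∪ s₂) t = G.interedges s₁ t ∪ G.interedges s₂ t := by
  ext
  simp only [mem_interedges_iff, mem_union]
  tauto

theorem card_interedges_union_left {s₁ s₂ : Finset V} (h : Disjoint s₁ s₂) (t : Finset V) :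
    #(G.interedges (s₁ ∪ s₂) t) = #(G.interedges s₁ t) + #(G.interedges s₂ t) := by
  rw [interedges_union_left, card_union_of_disjoint (G.interedges_disjoint_left h t)]

theorem card_interedges_union_right (s : Finset V) {t₁ t₂ : Finset V} (h : Disjoint t₁ t₂) :
    #(G.interedges s (t₁ ∪ t₂)) = #(G.interedges s t₁) + #(G.interedges s t₂) := by
  rw [card_interedges_comm, card_interedges_union_left _ h, card_interedges_comm,
    G.card_interedges_comm t₂]

theorem card_interedges_union_union {s t : Finset V} (h : Disjoint s t) :
    #(G.interedges (s ∪ t) (s ∪ t)) =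
      #(G.interedges s s) + 2 * #(G.interedges s t) + #(G.interedges t t) := by
  rw [card_interedges_union_left _ h, card_interedges_union_right _ _ h,
    card_interedges_union_right _ _ h, G.card_interedges_comm t s]
  ring

theorem card_interedges_singleton_left (v : V) (s : Finset V) :
    #(G.interedges {v} s) = #(nbrsIn G s v) := by
  rw [← card_map (Function.Embedding.sectR v V)]
  congr 1
  ext ⟨a, b⟩
  simp only [mem_map, mem_interedges_iff, nbrsIn, mem_filter, mem_singleton,
    Function.Embedding.sectR_apply, Prod.mk.injEq]
  constructor
  · rintro ⟨rfl, hb, hadj⟩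
    exact ⟨b, ⟨hb, hadj⟩, rfl, rfl⟩
  · rintro ⟨w, ⟨hw, hadj⟩, rfl, rfl⟩
    exact ⟨rfl, hw, hadj⟩

theorem nbrsIn_sdiff_singleton_self (s : Finset V) (v : V) :
    nbrsIn G (s \ {v}) v = nbrsIn G s v := by
  ext w
  simp only [nbrsIn, mem_filter, mem_sdiff, mem_singleton]
  exact ⟨fun h => ⟨h.1.1, h.2⟩, fun h => ⟨⟨h.1, (G.ne_of_adj h.2).symm⟩, h.2⟩⟩

variable {G} in
theorem IsAcyclic.exists_subset_sparse_cut (hG : G.IsAcyclic) {C : Finset V} {v : V}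
    (hv : v ∈ C) {d : ℕ} (hd : d ≤ #(nbrsIn G C v)) :
    ∃ S ⊆ C \ {v}, d * (#C - 1) ≤ #(nbrsIn G C v) * #S ∧ #(G.interedges S (C \ S)) ≤ d := by
  classical
  set H := G.deleteEdges (G.incidenceSet v)
  set A := C \ {v}
  set N := nbrsIn G C v
  have hA : #A = #C - 1 := by
    rw [card_sdiff_of_subset (singleton_subset_iff.2 hv), card_singleton]
  let comp : V → Finset V := fun x => {y ∈ A | H.Reachable x y}
  have hcomp : (N : Set V).PairwiseDisjoint comp := by
    intro x hx y hy hxy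
    simp only [Function.onFun]
    refine Finset.disjoint_left.2 fun z hzx hzy => ?_
    exact hG.not_reachable_deleteEdges_incidenceSet (mem_filter.1 hx).2 (mem_filter.1 hy).2 hxy
      ((mem_filter.1 hzx).2.trans (mem_filter.1 hzy).2.symm)
  have hsumN : ∑ x ∈ N, #(comp x) ≤ #A := by
    rw [← card_biUnion hcomp]
    exact card_le_card (biUnion_subset.2 fun x _ => filter_subset _ _)
  obtain ⟨E, hEN, hEcard, hEsum⟩ :=
    N.exists_subset_card_eq_mul_sum_le (fun x => #(comp x)) (m := #N - d) (by omega)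
  -- `S` is what remains of `A` after discarding the components of the neighbours in `E`.
  set S := {y ∈ A | ∀ x ∈ E, ¬ H.Reachable x y}
  have hsize : #A ≤ #S + ∑ x ∈ E, #(comp x) := by
    have : A ⊆ S ∪ E.biUnion comp := by
      intro y hy
      by_cases h : ∀ x ∈ E, ¬ H.Reachable x y
      · exact mem_union_left _ (mem_filter.2 ⟨hy, h⟩)
      · push Not at h
        obtain ⟨x, hx, hxy⟩ := h
        exact mem_union_right _ (mem_biUnion.2 ⟨x, hx, mem_filter.2 ⟨hy, hxy⟩⟩)
    exact (card_le_card this).trans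
      ((card_union_le _ _).trans (add_le_add_right card_biUnion_le _))
  have hcut : G.interedges S (C \ S) ⊆ G.interedges S {v} := by
    rintro ⟨s, y⟩ h
    rw [mem_interedges_iff] at h ⊢
    obtain ⟨hs, hy, hsy⟩ := h
    refine ⟨hs, mem_singleton.2 ?_, hsy⟩
    by_contra hyv
    have hyA : y ∈ A := mem_sdiff.2 ⟨(mem_sdiff.1 hy).1, by simpa using hyv⟩
    obtain ⟨x, hx, hxy⟩ : ∃ x ∈ E, H.Reachable x y := by
      by_contra! h
      exact (mem_sdiff.1 hy).2 (mem_filter.2 ⟨hyA, h⟩)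
    have hsv : s ≠ v := mt mem_singleton.2 (mem_sdiff.1 (mem_filter.1 hs).1).2
    have hHys : H.Adj y s :=
      deleteEdges_adj.2 ⟨hsy.symm, by simp [mk'_mem_incidenceSet_iff]; tauto⟩
    exact (mem_filter.1 hs).2 x hx (hxy.trans hHys.reachable)
  have hnbrs : nbrsIn G S v ⊆ N \ E := by
    intro y hy
    obtain ⟨hyS, hvy⟩ := mem_filter.1 hy
    exact mem_sdiff.2 ⟨mem_filter.2 ⟨(mem_sdiff.1 (mem_filter.1 hyS).1).1, hvy⟩,
      fun hyE => (mem_filter.1 hyS).2 y hyE (Reachable.refl y)⟩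
  refine ⟨S, filter_subset _ _, ?_, ?_⟩
  · have h1 := Nat.mul_le_mul_left #N hsize
    have h2 := Nat.mul_le_mul_left (#N - d) hsumN
    rw [← hA]
    zify [hd] at h1 h2 hEsum ⊢
    linarith
  · calc #(G.interedges S (C \ S)) ≤ #(G.interedges S {v}) := card_le_card hcut
      _ = #(nbrsIn G S v) := by rw [card_interedges_comm, card_interedges_singleton_left]
      _ ≤ #(N \ E) := card_le_card hnbrs
      _ = d := by rw [card_sdiff_of_subset hEN, hEcard]; omega

end SimpleGraph

section Partition

variable {V : Type*} {k : ℕ}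

def IsKPartition (P : Fin k → Finset V) : Prop :=
  (∀ i, (P i).Nonempty) ∧ (∀ i j, i ≠ j → Disjoint (P i) (P j)) ∧ (∀ v : V, ∃ i, v ∈ P i)

theorem exists_isKPartition [Fintype V] (hk : 0 < k) (hcard : k ≤ Fintype.card V) :
    ∃ P : Fin k → Finset V, IsKPartition P := by
  obtain ⟨e⟩ :=
    Function.Embedding.nonempty_of_card_le (α := Fin k) (β := V) (by simpa using hcard)
  have : Nonempty (Fin k) := ⟨⟨0, hk⟩⟩
  have hf := Function.invFun_surjective e.injective
  refine ⟨fun i => {w | Function.invFun e w = i}, fun i => ?_, fun i j hij => ?_,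
    fun w => ⟨_, mem_filter.2 ⟨mem_univ w, rfl⟩⟩⟩
  · obtain ⟨w, hw⟩ := hf i
    exact ⟨w, mem_filter.2 ⟨mem_univ w, hw⟩⟩
  · exact disjoint_filter.2 fun w _ hi hj => hij (hi ▸ hj)

variable [DecidableEq V]

def transfer (P : Fin k → Finset V) (i j : Fin k) (B : Finset V) : Fin k → Finset V :=
  Function.update (Function.update P i (P i \ B)) j (P j ∪ B)

theorem isKPartition_transfer {P : Fin k → Finset V} {i j : Fin k} {B : Finset V}
    (hP : IsKPartition P) (hij : i ≠ j) (hB : B ⊆ P i) (hS : (P i \ B).Nonempty) :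
    IsKPartition (transfer P i j B) := by
  obtain ⟨hne, hdisj, hcov⟩ := hP
  have hout : ∀ l ≠ i, ∀ w ∈ P l, w ∉ B := fun l hli w hw hwB =>
    disjoint_left.1 (hdisj l i hli) hw (hB hwB)
  have hmem : ∀ l w, w ∈ transfer P i j B l ↔ (l = j ∧ w ∈ B) ∨ (w ∉ B ∧ w ∈ P l) := by
    intro l w
    rcases eq_or_ne l j with rfl | hlj
    · simp only [transfer, Function.update_self, mem_union]
      tauto
    rcases eq_or_ne l i with rfl | hli
    · simp only [transfer, Function.update_of_ne hlj, Function.update_self, mem_sdiff]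
      tauto
    · simp only [transfer, Function.update_of_ne hlj, Function.update_of_ne hli]
      have := hout l hli w
      tauto
  refine ⟨fun l => ?_, fun a b hab => disjoint_left.2 fun w ha hb => ?_, fun w => ?_⟩
  · rcases eq_or_ne l i with rfl | hli
    · simpa [transfer, Function.update_of_ne hij] using hS
    · obtain ⟨w, hw⟩ := hne l
      exact ⟨w, (hmem l w).2 (Or.inr ⟨hout l hli w hw, hw⟩)⟩
  · rw [hmem] at ha hb
    rcases ha with ⟨rfl, hwB⟩ | ⟨hwB, hwa⟩ <;> rcases hb with ⟨rfl, hwB'⟩ | ⟨hwB', hwb⟩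
    · exact hab rfl
    · exact hwB' hwB
    · exact hwB hwB'
    · exact disjoint_left.1 (hdisj a b hab) hwa hwb
  · by_cases hw : w ∈ B
    · exact ⟨j, (hmem j w).2 (Or.inl ⟨rfl, hw⟩)⟩
    · obtain ⟨l, hl⟩ := hcov w
      exact ⟨l, (hmem l w).2 (Or.inr ⟨hw, hl⟩)⟩

variable [Fintype V] (G : SimpleGraph V) [DecidableRel G.Adj]

-- `interedges C C` counts every edge inside `C` twice.
def partWeight (C : Finset V) : ℤ :=
  Fintype.card V * #(G.interedges C C) - #C ^ 2

def potential (P : Fin k → Finset V) : ℤ :=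
  ∑ l, partWeight G (P l)

def transferGain (C D B : Finset V) : ℤ :=
  Fintype.card V * ((#(G.interedges B D) : ℤ) - #(G.interedges (C \ B) B)) +
    #B * ((#(C \ B) : ℤ) - #D)

theorem potential_transfer {P : Fin k → Finset V} {i j : Fin k} {B : Finset V} (hij : i ≠ j)
    (hB : B ⊆ P i) (hdisj : Disjoint (P i) (P j)) :
    potential G (transfer P i j B) = potential G P + 2 * transferGain G (P i) (P j) B := by
  have hPi : P i = (P i \ B) ∪ B := (sdiff_union_of_subset hB).symm
  have hSB : Disjoint (P i \ B) B := sdiff_disjoint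
  have hjB : Disjoint (P j) B := hdisj.symm.mono_right hB
  have hei := G.card_interedges_union_union hSB
  have hej := G.card_interedges_union_union hjB
  have hci := card_union_of_disjoint hSB
  have hcj := card_union_of_disjoint hjB
  rw [← hPi] at hei hci
  unfold potential transfer
  rw [Fintype.sum_apply_update, Fintype.sum_apply_update, Function.update_of_ne hij.symm]
  unfold partWeight transferGain
  rw [hej, hcj, hei, hci, G.card_interedges_comm B (P j)]
  push_cast
  ring

end Partition

theorem SimpleGraph.IsAcyclic.exists_transferGain_pos {V : Type*} [Fintype V] [DecidableEq V]
    {G : SimpleGraph V} [DecidableRel G.Adj] (hG : G.IsAcyclic) {C D : Finset V}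
    (hCD : Disjoint C D) {v : V} (hv : v ∈ C)
    (hviol : #(nbrsIn G C v) * #D < #(nbrsIn G D v) * (#C - 1)) :
    ∃ B ⊆ C, (C \ B).Nonempty ∧ 0 < transferGain G C D B := by
  have hn : #C + #D ≤ Fintype.card V :=
    (card_union_of_disjoint hCD).symm.le.trans (card_le_univ _)
  have hC : 2 ≤ #C := by
    by_contra! h
    rw [Nat.sub_eq_zero_of_le (by omega), mul_zero] at hviol
    omega
  rcases le_or_gt #(nbrsIn G C v) #(nbrsIn G D v) with hle | hlt
  · have hCv : #(C \ {v}) = #C - 1 := by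
      rw [card_sdiff_of_subset (singleton_subset_iff.2 hv), card_singleton]
    refine ⟨{v}, singleton_subset_iff.2 hv, card_pos.1 (by omega), ?_⟩
    rw [transferGain, card_interedges_singleton_left, card_interedges_comm,
      card_interedges_singleton_left, nbrsIn_sdiff_singleton_self, hCv, card_singleton]
    rcases hle.eq_or_lt with heq | hlt
    · have : #D < #C - 1 := by
        rw [← heq] at hviol
        exact Nat.lt_of_mul_lt_mul_left hviol
      rw [heq, sub_self, mul_zero]
      push_cast [hC.trans' one_le_two]
      omega
    · push_cast [hC.trans' one_le_two]
      have : (#(nbrsIn G C v) : ℤ) + 1 ≤ #(nbrsIn G D v) := by exact_mod_cast hlt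
      nlinarith
  · obtain ⟨S, hSC, hsize, hcut⟩ := hG.exists_subset_sparse_cut hv hlt.le
    have hSC' : S ⊆ C := hSC.trans sdiff_subset
    have hvB : v ∈ C \ S :=
      mem_sdiff.2 ⟨hv, fun h => (mem_sdiff.1 (hSC h)).2 (mem_singleton_self v)⟩
    have hDS : #D < #S := Nat.lt_of_mul_lt_mul_left (hviol.trans_le hsize)
    have hcross : #(nbrsIn G D v) ≤ #(G.interedges (C \ S) D) := by
      rw [← card_interedges_singleton_left]
      exact card_le_card (G.interedges_mono (singleton_subset_iff.2 hvB) subset_rfl)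
    refine ⟨C \ S, sdiff_subset, ?_, ?_⟩
    · rw [Finset.sdiff_sdiff_eq_self hSC']
      exact card_pos.1 (by omega)
    rw [transferGain, Finset.sdiff_sdiff_eq_self hSC']
    have hB : 0 < #(C \ S) := card_pos.2 ⟨v, hvB⟩
    zify at hcut hcross hDS hB
    have := mul_pos hB (sub_pos.2 hDS)
    nlinarith

/-- Every forest with at least `k` vertices admits a generalized `k`-community
structure. -/
theorem stmt_15 {V : Type*} [Fintype V] [DecidableEq V] (G : SimpleGraph V)
    [DecidableRel G.Adj] (hforest : G.IsAcyclic) {k : ℕ} (hk : 2 ≤ k)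
    (hcard : k ≤ Fintype.card V) :
    ∃ C : Fin k → Finset V, IsGenKComm G C := by
  classical
  obtain ⟨P₀, hP₀⟩ := exists_isKPartition (V := V) (by omega : 0 < k) hcard
  obtain ⟨P, hP, hmax⟩ := exists_max_image {P : Fin k → Finset V | IsKPartition P}
    (potential G) ⟨P₀, mem_filter.2 ⟨mem_univ _, hP₀⟩⟩
  replace hP : IsKPartition P := (mem_filter.1 hP).2
  obtain ⟨hne, hdisj, hcov⟩ := id hP
  refine ⟨P, hne, hdisj, hcov, fun i j hij v hv => ?_⟩
  by_contra! hviol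
  obtain ⟨B, hB, hS, hgain⟩ := hforest.exists_transferGain_pos (hdisj i j hij) hv hviol
  have hle := hmax _ (mem_filter.2 ⟨mem_univ _, isKPartition_transfer hP hij hB hS⟩)
  rw [potential_transfer G hij hB (hdisj i j hij)] at hle
  omega
end

section
/- Let G = (V,E) be a connected threshold graph with n = |V| ≥ 4 vertices. Then G admits a 2-community structure if and only if G is not isomorphic to the star S_{n−1} (the complete bipartite graph K_{1,n−1}). -/
/-- A 2-community structure of `G`: a partition `{C₁, C₂}` of the vertex set into two
sets, each of size at least 2, satisfying the proportionality condition. -/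
def Is2Comm {V : Type*} [Fintype V] [DecidableEq V] (G : SimpleGraph V) [DecidableRel G.Adj]
    (C₁ C₂ : Finset V) : Prop :=
  2 ≤ C₁.card ∧ 2 ≤ C₂.card ∧ Disjoint C₁ C₂ ∧ C₁ ∪ C₂ = Finset.univ ∧
  (∀ v ∈ C₁, (nbrsIn G C₂ v).card * (C₁.card - 1) ≤ (nbrsIn G C₁ v).card * C₂.card) ∧
  (∀ v ∈ C₂, (nbrsIn G C₁ v).card * (C₂.card - 1) ≤ (nbrsIn G C₂ v).card * C₁.card)

/-- `G` is a threshold graph: its vertex set can be partitioned into a clique `Q` and an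
independent set `S` whose (open) neighbourhoods are linearly ordered by inclusion. -/
def IsThresholdGraph {V : Type*} [Fintype V] [DecidableEq V] (G : SimpleGraph V)
    [DecidableRel G.Adj] : Prop :=
  ∃ Q S : Finset V, Disjoint Q S ∧ Q ∪ S = Finset.univ ∧
    G.IsClique (↑Q : Set V) ∧
    (∀ w ∈ S, ∀ w' ∈ S, ¬ G.Adj w w') ∧
    (∀ w ∈ S, ∀ w' ∈ S,
      G.neighborFinset w ⊆ G.neighborFinset w' ∨ G.neighborFinset w' ⊆ G.neighborFinset w)

/-!
A connected threshold graph on at least two vertices has a universal vertex `c`. If `G` is the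
star centred at `c`, the community avoiding `c` contains a vertex whose only neighbour lies in
the other community, which violates the inequality. Otherwise sort the independent part `S` by
degree and let `T` be the longest initial segment whose vertices satisfy `deg w * #T < n`. Then
`{c} ∪ T` and its complement form a 2-community structure: for `w ∈ S` the inequality reduces to
a comparison of `deg w` with `n / #T` or `n / (#T + 1)`, which is how `T` was chosen. A clique
vertex `v ≠ c` either sees its whole community, or misses some `y ∈ S \ T`; then, by nestedness,
it misses all of `T`, so it has no more neighbours than `y` in `{c} ∪ T` and no fewer outside.
-/

open Finset SimpleGraph

section Star

variable {V : Type*}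

theorem SimpleGraph.Iso.eq_starGraph {α β : Type*} [Unique α] {G : SimpleGraph V}
    (e : G ≃g completeBipartiteGraph α β) : G = starGraph (e.symm (Sum.inl default)) := by
  have hleft : ∀ z, (e z).isLeft ↔ z = e.symm (Sum.inl default) := fun z => by
    rw [RelIso.eq_symm_apply]
    cases e z <;> simp [Unique.eq_default]
  ext x y
  rw [← e.map_adj_iff, completeBipartiteGraph_adj, starGraph_adj, ← Sum.not_isLeft,
    ← Sum.not_isLeft, hleft, hleft]
  constructor
  · rintro (⟨hx, hy⟩ | ⟨hx, hy⟩)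
    · exact ⟨fun h => hy (h ▸ hx), .inl hx⟩
    · exact ⟨fun h => hx (h ▸ hy), .inr hy⟩
  · rintro ⟨hxy, rfl | rfl⟩
    · exact .inl ⟨rfl, Ne.symm hxy⟩
    · exact .inr ⟨hxy, rfl⟩

def starGraphIso (c : V) [DecidableEq V] :
    starGraph c ≃g completeBipartiteGraph Unit {v // v ≠ c} where
  toFun v := if h : v = c then .inl () else .inr ⟨v, h⟩
  invFun := Sum.elim (fun _ => c) Subtype.val
  left_inv v := by by_cases h : v = c <;> simp [h]
  right_inv := by rintro (⟨⟩ | ⟨v, hv⟩) <;> simp_all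
  map_rel_iff' {x y} := by
    by_cases hx : x = c <;> by_cases hy : y = c <;> subst_vars <;> simp [*, Ne.symm]

theorem SimpleGraph.IsUniversal.exists_adj_of_ne_starGraph {G : SimpleGraph V} {c : V}
    (hc : G.IsUniversal c) (hG : G ≠ starGraph c) :
    ∃ u v, u ≠ c ∧ v ≠ c ∧ G.Adj u v := by
  contrapose! hG
  ext x y
  rw [starGraph_adj]
  refine ⟨fun h => ⟨h.ne, ?_⟩, ?_⟩
  · by_contra! hxy
    exact hG x y hxy.1 hxy.2 h
  · rintro ⟨hxy, rfl | rfl⟩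
    · exact hc hxy
    · exact (hc hxy.symm).symm

variable [Fintype V] [DecidableEq V]

theorem nonempty_iso_completeBipartiteGraph_iff {G : SimpleGraph V} :
    Nonempty (G ≃g completeBipartiteGraph (Fin 1) (Fin (Fintype.card V - 1))) ↔
      ∃ c, G = starGraph c := by
  constructor
  · rintro ⟨e⟩
    exact ⟨_, e.eq_starGraph⟩
  · rintro ⟨c, rfl⟩
    have hcard : Fintype.card {v // v ≠ c} = Fintype.card V - 1 := by
      simp [Fintype.card_subtype_compl]
    exact ⟨(starGraphIso c).trans <| completeBipartiteGraphCongr (Equiv.ofUnique Unit (Fin 1))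
      (Fintype.equivFinOfCardEq hcard)⟩

end Star

section Community

variable {V : Type*} [DecidableEq V] {G : SimpleGraph V} [DecidableRel G.Adj]
  {C D : Finset V} {v w : V}

def CommunityIneq (G : SimpleGraph V) [DecidableRel G.Adj] (C D : Finset V) (v : V) : Prop :=
  #(nbrsIn G D v) * (#C - 1) ≤ #(nbrsIn G C v) * #D

theorem communityIneq_of_forall_adj (hv : v ∈ C) (h : ∀ u ∈ C, u ≠ v → G.Adj v u) :
    CommunityIneq G C D v := by
  have hC : nbrsIn G C v = C.erase v := by
    ext u
    simp only [nbrsIn, mem_filter, mem_erase]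
    exact ⟨fun ⟨hu, huv⟩ => ⟨huv.ne.symm, hu⟩,
      fun ⟨huv, hu⟩ => ⟨hu, h u hu huv⟩⟩
  rw [CommunityIneq, hC, card_erase_of_mem hv, mul_comm]
  exact Nat.mul_le_mul_left _ (card_filter_le _ _)

theorem CommunityIneq.of_subset (h : CommunityIneq G C D w)
    (hD : nbrsIn G D v ⊆ nbrsIn G D w) (hC : nbrsIn G C w ⊆ nbrsIn G C v) :
    CommunityIneq G C D v :=
  calc #(nbrsIn G D v) * (#C - 1) ≤ #(nbrsIn G D w) * (#C - 1) := by gcongr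
    _ ≤ #(nbrsIn G C w) * #D := h
    _ ≤ #(nbrsIn G C v) * #D := by gcongr

theorem not_communityIneq_starGraph {c : V} [DecidableRel (starGraph c).Adj] (hv : v ∈ C)
    (hcC : c ∉ C) (hcD : c ∈ D) (hC : 2 ≤ #C) : ¬ CommunityIneq (starGraph c) C D v := by
  have hvc : v ≠ c := fun h => hcC (h ▸ hv)
  have hC : nbrsIn (starGraph c) C v = ∅ := by
    refine filter_eq_empty_iff.mpr fun u hu huv => ?_
    rw [starGraph_adj] at huv
    exact huv.2.elim hvc fun h => hcC (h ▸ hu)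
  have hD : 0 < #(nbrsIn (starGraph c) D v) :=
    card_pos.mpr ⟨c, mem_filter.mpr ⟨hcD, by simpa [starGraph_adj] using hvc⟩⟩
  rw [CommunityIneq, hC, card_empty, zero_mul, Nat.le_zero, mul_eq_zero]
  omega

variable [Fintype V]

theorem is2Comm_compl (h₁ : 2 ≤ #C) (h₂ : 2 ≤ #Cᶜ)
    (hC : ∀ v ∈ C, CommunityIneq G C Cᶜ v) (hCc : ∀ v ∈ Cᶜ, CommunityIneq G Cᶜ C v) :
    Is2Comm G C Cᶜ :=
  ⟨h₁, h₂, disjoint_compl_right, union_compl C, hC, hCc⟩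

theorem Is2Comm.symm {C₁ C₂ : Finset V} (h : Is2Comm G C₁ C₂) : Is2Comm G C₂ C₁ :=
  let ⟨h₁, h₂, hd, hu, hC₁, hC₂⟩ := h
  ⟨h₂, h₁, hd.symm, union_comm C₁ C₂ ▸ hu, hC₂, hC₁⟩

theorem nbrsIn_eq_filter (C : Finset V) (v : V) :
    nbrsIn G C v = (G.neighborFinset v).filter (· ∈ C) := by
  ext; simp [nbrsIn, and_comm]

theorem card_nbrsIn_add_card_nbrsIn_compl (C : Finset V) (v : V) :
    #(nbrsIn G C v) + #(nbrsIn G Cᶜ v) = G.degree v := by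
  simp only [nbrsIn_eq_filter, mem_compl]
  exact card_filter_add_card_filter_not _

theorem not_is2Comm_starGraph (c : V) [DecidableRel (starGraph c).Adj] (C₁ C₂ : Finset V) :
    ¬ Is2Comm (starGraph c) C₁ C₂ := by
  suffices h : ∀ C₁ C₂, c ∈ C₁ → ¬ Is2Comm (starGraph c) C₁ C₂ by
    intro h₁₂
    obtain hc | hc := mem_union.mp (h₁₂.2.2.2.1 ▸ mem_univ c)
    exacts [h C₁ C₂ hc h₁₂, h C₂ C₁ hc h₁₂.symm]
  rintro C₁ C₂ hc ⟨-, h₂, hd, -, -, hC₂⟩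
  obtain ⟨v, hv⟩ := card_pos.mp (by omega : 0 < #C₂)
  exact not_communityIneq_starGraph hv (disjoint_left.mp hd hc) hc h₂ (hC₂ v hv)

end Community

/-- Take `T ⊆ S` of largest size with the first two properties: if the third failed at `y`,
adding a minimiser of `f` on `S \ T` to `T` would preserve them. -/
theorem Finset.exists_subset_mul_card_lt_le_mul_card_succ {α : Type*} [DecidableEq α]
    (S : Finset α) (f : α → ℕ) (N : ℕ) :
    ∃ T ⊆ S, (∀ x ∈ T, ∀ y ∈ S \ T, f x ≤ f y) ∧ (∀ x ∈ T, f x * #T < N) ∧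
      ∀ y ∈ S \ T, N ≤ f y * (#T + 1) := by
  let P : Finset α → Prop := fun T =>
    (∀ x ∈ T, ∀ y ∈ S \ T, f x ≤ f y) ∧ ∀ x ∈ T, f x * #T < N
  obtain ⟨T, hT, hmax⟩ := exists_max_image (S.powerset.filter P) card ⟨∅, by simp [P]⟩
  obtain ⟨hTS, hdown, hlow⟩ : T ⊆ S ∧ P T := by simpa using hT
  refine ⟨T, hTS, hdown, hlow, fun y hy => ?_⟩
  by_contra! hy'
  obtain ⟨z, hz, hzmin⟩ := exists_min_image (S \ T) f ⟨y, hy⟩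
  obtain ⟨hzS, hzT⟩ := mem_sdiff.mp hz
  have hbelow : ∀ x ∈ insert z T, f x ≤ f y := by
    intro x hx
    obtain rfl | hx := mem_insert.mp hx
    exacts [hzmin y hy, hdown x hx y hy]
  have hPz : P (insert z T) := by
    refine ⟨fun x hx w hw => ?_, fun x hx => ?_⟩
    · have hwT : w ∈ S \ T := by simp_all
      obtain rfl | hx := mem_insert.mp hx
      exacts [hzmin w hwT, hdown x hx w hwT]
    · rw [card_insert_of_notMem hzT]
      exact lt_of_le_of_lt (Nat.mul_le_mul_right _ (hbelow x hx)) hy'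
  have := hmax _ (mem_filter.mpr ⟨mem_powerset.mpr (insert_subset hzS hTS), hPz⟩)
  rw [card_insert_of_notMem hzT] at this
  omega

section Threshold

variable {V : Type*} [Fintype V] [DecidableEq V] {G : SimpleGraph V} [DecidableRel G.Adj]

structure IsThresholdPartition (G : SimpleGraph V) [DecidableRel G.Adj] (Q S : Finset V) :
    Prop where
  disjoint : Disjoint Q S
  union_eq_univ : Q ∪ S = univ
  isClique : G.IsClique (Q : Set V)
  not_adj : ∀ w ∈ S, ∀ w' ∈ S, ¬ G.Adj w w'
  nested : ∀ w ∈ S, ∀ w' ∈ S,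
    G.neighborFinset w ⊆ G.neighborFinset w' ∨ G.neighborFinset w' ⊆ G.neighborFinset w

theorem IsThresholdGraph.exists_isThresholdPartition_nonempty [Nonempty V]
    (hG : IsThresholdGraph G) :
    ∃ Q S, IsThresholdPartition G Q S ∧ S.Nonempty := by
  obtain ⟨Q, S, hd, hu, hQ, hS, hnest⟩ := hG
  obtain hS' | rfl := S.eq_empty_or_nonempty.symm
  · exact ⟨Q, S, ⟨hd, hu, hQ, hS, hnest⟩, hS'⟩
  obtain ⟨x⟩ := ‹Nonempty V›
  -- with no independent part, any vertex of the clique can serve as one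
  refine ⟨univ.erase x, {x}, ⟨by simp, by simp, ?_, by simp, by simp⟩, singleton_nonempty x⟩
  rw [union_empty] at hu
  subst hu
  exact hQ.subset (coe_subset.mpr (erase_subset x univ))

namespace IsThresholdPartition

variable {Q S T : Finset V} {c v w w' x : V} (hP : IsThresholdPartition G Q S)
include hP

theorem mem_left_of_notMem_right (hv : v ∉ S) : v ∈ Q :=
  (mem_union.mp (hP.union_eq_univ ▸ mem_univ v)).resolve_right hv

theorem notMem_right_of_mem_left (hv : v ∈ Q) : v ∉ S :=
  disjoint_left.mp hP.disjoint hv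

theorem mem_left_of_adj (hw : w ∈ S) (h : G.Adj w x) : x ∈ Q :=
  hP.mem_left_of_notMem_right fun hx => hP.not_adj w hw x hx h

theorem neighborFinset_subset_of_degree_le (hw : w ∈ S) (hw' : w' ∈ S)
    (h : G.degree w ≤ G.degree w') : G.neighborFinset w ⊆ G.neighborFinset w' := by
  obtain h' | h' := hP.nested w hw w' hw'
  · exact h'
  · exact (eq_of_subset_of_card_le h' h).ge

theorem exists_isUniversal (hS : S.Nonempty) (hadj : ∀ v, ∃ u, G.Adj v u) :
    ∃ c ∈ Q, G.IsUniversal c := by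
  obtain ⟨w₀, hw₀, hmin⟩ := exists_min_image S (fun v => G.degree v) hS
  obtain ⟨c, hc⟩ := hadj w₀
  have hcS : ∀ w ∈ S, G.Adj w c := fun w hw => by
    simpa using hP.neighborFinset_subset_of_degree_le hw₀ hw (hmin w hw) (by simpa using hc)
  have hcQ := hP.mem_left_of_adj hw₀ hc
  refine ⟨c, hcQ, fun v hcv => ?_⟩
  by_cases hv : v ∈ S
  · exact (hcS v hv).symm
  · exact hP.isClique hcQ (hP.mem_left_of_notMem_right hv) hcv

theorem card_insert_of_mem (hcQ : c ∈ Q) (hTS : T ⊆ S) : #(insert c T) = #T + 1 :=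
  card_insert_of_notMem fun h => hP.notMem_right_of_mem_left hcQ (hTS h)

section Construction

variable (hcQ : c ∈ Q) (hc : G.IsUniversal c) (hTS : T ⊆ S)
include hcQ hc hTS

theorem nbrsIn_insert_of_mem (hw : w ∈ S) :
    nbrsIn G (insert c T) w = {c} := by
  ext u
  simp only [nbrsIn, mem_filter, mem_insert, mem_singleton]
  refine ⟨fun ⟨hu, h⟩ => hu.resolve_right fun hu => hP.not_adj w hw u (hTS hu) h, ?_⟩
  rintro rfl
  exact ⟨.inl rfl, (hc fun h => hP.notMem_right_of_mem_left hcQ (h ▸ hw)).symm⟩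

theorem card_nbrsIn_compl_insert (hw : w ∈ S) :
    #(nbrsIn G (insert c T)ᶜ w) = G.degree w - 1 := by
  have := card_nbrsIn_add_card_nbrsIn_compl (G := G) (insert c T) w
  rw [hP.nbrsIn_insert_of_mem hcQ hc hTS hw, card_singleton] at this
  omega

theorem communityIneq_of_mem_low (hw : w ∈ T) (hlow : G.degree w * #T < Fintype.card V) :
    CommunityIneq G (insert c T) (insert c T)ᶜ w := by
  rw [CommunityIneq, hP.card_nbrsIn_compl_insert hcQ hc hTS (hTS hw),
    hP.nbrsIn_insert_of_mem hcQ hc hTS (hTS hw), card_compl, hP.card_insert_of_mem hcQ hTS,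
    card_singleton, Nat.add_sub_cancel, Nat.sub_one_mul]
  omega

theorem communityIneq_of_mem_high (hw : w ∈ S)
    (hhigh : Fintype.card V ≤ G.degree w * (#T + 1)) :
    CommunityIneq G (insert c T)ᶜ (insert c T) w := by
  rw [CommunityIneq, hP.card_nbrsIn_compl_insert hcQ hc hTS hw,
    hP.nbrsIn_insert_of_mem hcQ hc hTS hw, card_compl, hP.card_insert_of_mem hcQ hTS,
    card_singleton, Nat.sub_one_mul]
  omega

theorem communityIneq_of_mem_clique
    (hdown : ∀ x ∈ T, ∀ y ∈ S \ T, G.degree x ≤ G.degree y)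
    (hhigh : ∀ y ∈ S \ T, Fintype.card V ≤ G.degree y * (#T + 1)) (hv : v ∈ Q)
    (hvc : v ≠ c) :
    CommunityIneq G (insert c T)ᶜ (insert c T) v := by
  have hvC : v ∈ (insert c T)ᶜ := by
    simpa [hvc] using fun h => hP.notMem_right_of_mem_left hv (hTS h)
  by_cases hall : ∀ y ∈ S \ T, G.Adj v y
  · refine communityIneq_of_forall_adj hvC fun u hu huv => ?_
    rw [mem_compl, mem_insert, not_or] at hu
    by_cases huS : u ∈ S
    · exact hall u (mem_sdiff.mpr ⟨huS, hu.2⟩)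
    · exact hP.isClique hv (hP.mem_left_of_notMem_right huS) huv.symm
  push Not at hall
  obtain ⟨y, hy, hvy⟩ := hall
  obtain ⟨hyS, hyT⟩ := mem_sdiff.mp hy
  refine (hP.communityIneq_of_mem_high hcQ hc hTS hyS (hhigh y hy)).of_subset ?_ ?_
  · intro u hu
    simp only [nbrsIn, mem_filter, mem_insert] at hu ⊢
    refine ⟨hu.1, ?_⟩
    obtain ⟨rfl | huT, hvu⟩ := hu
    · exact (hc fun h => hP.notMem_right_of_mem_left hcQ (h ▸ hyS)).symm
    · have hNu := hP.neighborFinset_subset_of_degree_le (hTS huT) hyS (hdown u huT y hy)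
      exact (hvy (G.adj_symm ((G.mem_neighborFinset y v).mp
        (hNu ((G.mem_neighborFinset u v).mpr hvu.symm))))).elim
  · intro u hu
    simp only [nbrsIn, mem_filter] at hu ⊢
    refine ⟨hu.1, hP.isClique hv (hP.mem_left_of_adj hyS hu.2) ?_⟩
    rintro rfl
    exact hvy hu.2.symm

theorem two_le_card_compl_insert (hlow : ∀ x ∈ T, G.degree x * #T < Fintype.card V)
    (hn : 4 ≤ Fintype.card V) (hG : G ≠ starGraph c) : 2 ≤ #(insert c T)ᶜ := by
  obtain ⟨u, v, huc, hvc, huv⟩ := hc.exists_adj_of_ne_starGraph hG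
  wlog hu : u ∉ T generalizing u v
  · exact this v u hvc huc huv.symm fun hv => hP.not_adj u (hTS (not_not.mp hu)) v (hTS hv) huv
  by_contra! h
  have huC : u ∈ (insert c T)ᶜ := by simp [huc, hu]
  -- the small community `(insert c T)ᶜ` is `{u}`, so `v ∈ T` has the two neighbours `c` and `u`
  have hvT : v ∈ T := by
    by_contra hvT
    exact huv.ne (card_le_one.mp (by omega) u huC v (by simp [hvc, hvT]))
  have hdeg : 2 ≤ G.degree v := by
    rw [← card_neighborFinset_eq_degree, ← card_pair huc.symm]
    refine card_le_card fun x hx => ?_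
    simp only [mem_insert, mem_singleton] at hx
    obtain rfl | rfl := hx <;> simp [(hc hvc.symm).symm, huv.symm]
  have hcard := card_add_card_compl (insert c T)
  rw [hP.card_insert_of_mem hcQ hTS] at hcard
  have := hlow v hvT
  have := Nat.mul_le_mul_right #T hdeg
  omega

theorem is2Comm_insert_compl (hdown : ∀ x ∈ T, ∀ y ∈ S \ T, G.degree x ≤ G.degree y)
    (hlow : ∀ x ∈ T, G.degree x * #T < Fintype.card V)
    (hhigh : ∀ y ∈ S \ T, Fintype.card V ≤ G.degree y * (#T + 1)) (hS : S.Nonempty)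
    (hn : 4 ≤ Fintype.card V) (hG : G ≠ starGraph c) :
    Is2Comm G (insert c T) (insert c T)ᶜ := by
  have hT : T.Nonempty := by
    rw [nonempty_iff_ne_empty]
    rintro rfl
    obtain ⟨w, hw⟩ := hS
    have := hhigh w (by simpa using hw)
    rw [card_empty, zero_add, mul_one] at this
    exact (G.degree_lt_card_verts w).not_ge this
  refine is2Comm_compl ?_ (hP.two_le_card_compl_insert hcQ hc hTS hlow hn hG)
    (fun v hv => ?_) (fun v hv => ?_)
  · rw [hP.card_insert_of_mem hcQ hTS]
    exact Nat.succ_le_succ hT.card_pos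
  · obtain rfl | hv := mem_insert.mp hv
    · exact communityIneq_of_forall_adj (mem_insert_self _ _) fun u _ huv => hc huv.symm
    · exact hP.communityIneq_of_mem_low hcQ hc hTS hv (hlow v hv)
  · rw [mem_compl, mem_insert, not_or] at hv
    by_cases hvS : v ∈ S
    · exact hP.communityIneq_of_mem_high hcQ hc hTS hvS (hhigh v (mem_sdiff.mpr ⟨hvS, hv.2⟩))
    · exact hP.communityIneq_of_mem_clique hcQ hc hTS hdown hhigh
        (hP.mem_left_of_notMem_right hvS) hv.1

end Construction

end IsThresholdPartition

end Threshold

/-- A connected threshold graph on `n ≥ 4` vertices admits a 2-community structure if and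
only if it is not isomorphic to the star `S_{n-1} = K_{1,n-1}`. -/
theorem stmt_17 {V : Type*} [Fintype V] [DecidableEq V] (G : SimpleGraph V)
    [DecidableRel G.Adj] (hth : IsThresholdGraph G) (hconn : G.Connected)
    (hn : 4 ≤ Fintype.card V) :
    (∃ C₁ C₂ : Finset V, Is2Comm G C₁ C₂) ↔
      ¬ Nonempty
        (G ≃g completeBipartiteGraph (Fin 1) (Fin (Fintype.card V - 1))) := by
  rw [nonempty_iso_completeBipartiteGraph_iff]
  constructor
  · rintro ⟨C₁, C₂, h⟩ ⟨c, rfl⟩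
    exact not_is2Comm_starGraph c C₁ C₂ h
  · intro hstar
    have : Nontrivial V := Fintype.one_lt_card_iff_nontrivial.mp (by omega)
    obtain ⟨Q, S, hP, hS⟩ := hth.exists_isThresholdPartition_nonempty
    obtain ⟨c, hcQ, hc⟩ := hP.exists_isUniversal hS hconn.preconnected.exists_adj_of_nontrivial
    obtain ⟨T, hTS, hdown, hlow, hhigh⟩ :=
      S.exists_subset_mul_card_lt_le_mul_card_succ (fun v => G.degree v) (Fintype.card V)
    exact ⟨_, _,
      hP.is2Comm_insert_compl hcQ hc hTS hdown hlow hhigh hS hn fun h => hstar ⟨c, h⟩⟩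
end

section
/- For all positive integers a, b, s with b·s < a + s, the graph G_{a,b,s} does not admit any 2-community structure. -/
lemma is2Comm_symm {V : Type*} [Fintype V] [DecidableEq V] (G : SimpleGraph V)
    [DecidableRel G.Adj] {C₁ C₂ : Finset V} (h : Is2Comm G C₁ C₂) : Is2Comm G C₂ C₁ := by
  obtain ⟨h1, h2, h3, h4, h5, h6⟩ := h
  exact ⟨h2, h1, h3.symm, by rwa [Finset.union_comm], h6, h5⟩

set_option maxHeartbeats 1000000 in
lemma key {V : Type*} [Fintype V] [DecidableEq V] (G : SimpleGraph V)
    [DecidableRel G.Adj] (a b s : ℕ) (ha : 0 < a) (hb : 0 < b) (hs : 0 < s)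
    (hineq : b * s < a + s)
    (A B S : Finset V) (u : V)
    (hA : A.card = a) (hB : B.card = b) (hS : S.card = s)
    (hAB : Disjoint A B) (hAS : Disjoint A S) (hBS : Disjoint B S)
    (hu : u ∉ A ∪ B ∪ S) (hcover : insert u (A ∪ B ∪ S) = Finset.univ)
    (hadj : ∀ x y : V, G.Adj x y ↔ x ≠ y ∧
      ((x ∈ A ∪ B ∧ y ∈ A ∪ B) ∨ (x ∈ A ∧ y ∈ S) ∨ (x ∈ S ∧ y ∈ A)))
    (C₁ C₂ : Finset V) (huC : u ∈ C₂) (hcomm : Is2Comm G C₁ C₂) : False := by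
  obtain ⟨hc1, hc2, hdisj, huniv, hP1, hP2⟩ := hcomm
  have huC1 : u ∉ C₁ := Finset.disjoint_right.1 hdisj huC
  have hcov : ∀ x : V, x = u ∨ x ∈ A ∪ B ∪ S := by
    intro x
    have : x ∈ insert u (A ∪ B ∪ S) := by rw [hcover]; exact Finset.mem_univ x
    simpa using this
  -- neighbour set computations
  have nbA : ∀ v ∈ A, ∀ C : Finset V, nbrsIn G C v = (C ∩ (A ∪ B ∪ S)).erase v := by
    intro v hv C
    have hvS : v ∉ S := Finset.disjoint_left.1 hAS hv
    ext w
    simp only [nbrsIn, Finset.mem_filter, Finset.mem_erase, Finset.mem_inter, hadj, ne_eq,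
      Finset.mem_union]
    constructor
    · rintro ⟨hc, hne, h⟩
      exact ⟨fun e => hne e.symm, hc, by tauto⟩
    · rintro ⟨hne, hc, h⟩
      exact ⟨hc, fun e => hne e.symm, by tauto⟩
  have nbB : ∀ v ∈ B, ∀ C : Finset V, nbrsIn G C v = (C ∩ (A ∪ B)).erase v := by
    intro v hv C
    have hvA : v ∉ A := Finset.disjoint_right.1 hAB hv
    have hvS : v ∉ S := Finset.disjoint_left.1 hBS hv
    ext w
    simp only [nbrsIn, Finset.mem_filter, Finset.mem_erase, Finset.mem_inter, hadj, ne_eq,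
      Finset.mem_union]
    constructor
    · rintro ⟨hc, hne, h⟩
      exact ⟨fun e => hne e.symm, hc, by tauto⟩
    · rintro ⟨hne, hc, h⟩
      exact ⟨hc, fun e => hne e.symm, by tauto⟩
  have nbS : ∀ v ∈ S, ∀ C : Finset V, nbrsIn G C v = C ∩ A := by
    intro v hv C
    have hvA : v ∉ A := Finset.disjoint_right.1 hAS hv
    have hvB : v ∉ B := Finset.disjoint_right.1 hBS hv
    ext w
    simp only [nbrsIn, Finset.mem_filter, Finset.mem_inter, hadj, ne_eq, Finset.mem_union]
    constructor
    · rintro ⟨hc, hne, h⟩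
      exact ⟨hc, by tauto⟩
    · rintro ⟨hc, hw⟩
      have : w ≠ v := fun e => hvA (e ▸ hw)
      exact ⟨hc, fun e => this e.symm, by tauto⟩
  -- basic set identities
  have hC1sub : C₁ ∩ (A ∪ B ∪ S) = C₁ := by
    apply Finset.inter_eq_left.2
    intro x hx
    rcases hcov x with rfl | h
    · exact absurd hx huC1
    · exact h
  have hC2eq : C₂ ∩ (A ∪ B ∪ S) = C₂.erase u := by
    ext x
    simp only [Finset.mem_inter, Finset.mem_erase, ne_eq]
    constructor
    · rintro ⟨hc, h⟩
      exact ⟨fun e => hu (e ▸ h), hc⟩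
    · rintro ⟨hne, hc⟩
      exact ⟨hc, (hcov x).resolve_left hne⟩
  -- step 1: A ∩ C₂ = ∅
  have hA2 : ∀ v ∈ A, v ∉ C₂ := by
    intro v hvA hvC2
    have hvC1 : v ∉ C₁ := Finset.disjoint_right.1 hdisj hvC2
    have h := hP2 v hvC2
    rw [nbA v hvA C₁, nbA v hvA C₂, hC1sub, hC2eq,
      Finset.erase_eq_of_notMem hvC1] at h
    have hvmem : v ∈ C₂.erase u := by
      refine Finset.mem_erase.2 ⟨?_, hvC2⟩
      intro e
      exact hu (e ▸ Finset.mem_union_left _ (Finset.mem_union_left _ hvA))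
    rw [Finset.card_erase_of_mem hvmem, Finset.card_erase_of_mem huC] at h
    obtain ⟨d, hd⟩ : ∃ d, C₂.card = d + 2 := ⟨C₂.card - 2, by omega⟩
    rw [hd] at h
    have e : d + 2 - 1 = d + 1 := by omega
    have e2 : d + 1 - 1 = d := by omega
    rw [e] at h; rw [e2] at h
    have h' : C₁.card * (d + 1) ≤ d * C₁.card := h
    have : 0 < C₁.card := by omega
    nlinarith [h']
  have hAC1 : C₁ ∩ A = A := by
    apply Finset.inter_eq_right.2
    intro x hx
    have : x ∈ C₁ ∪ C₂ := by rw [huniv]; exact Finset.mem_univ x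
    rcases Finset.mem_union.1 this with h | h
    · exact h
    · exact absurd h (hA2 x hx)
  have hAC2 : C₂ ∩ A = ∅ := by
    apply Finset.eq_empty_of_forall_notMem
    intro x hx
    rcases Finset.mem_inter.1 hx with ⟨h1, h2⟩
    exact hA2 x h2 h1
  -- step 2: S ∩ C₂ = ∅
  have hS2 : ∀ v ∈ S, v ∉ C₂ := by
    intro v hvS hvC2
    have h := hP2 v hvC2
    rw [nbS v hvS C₁, nbS v hvS C₂, hAC1, hAC2] at h
    have h' : a * (C₂.card - 1) ≤ 0 := by simpa [hA] using h
    have h1 : 0 < a * (C₂.card - 1) := Nat.mul_pos ha (by omega)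
    omega
  -- C₂ = insert u (C₂ ∩ B)
  have hC2B : C₂ = insert u (C₂ ∩ B) := by
    ext x
    simp only [Finset.mem_insert, Finset.mem_inter]
    constructor
    · intro hx
      rcases hcov x with rfl | h
      · exact Or.inl rfl
      · rcases Finset.mem_union.1 h with h' | hS'
        · rcases Finset.mem_union.1 h' with hA' | hB'
          · exact absurd hx (hA2 x hA')
          · exact Or.inr ⟨hx, hB'⟩
        · exact absurd hx (hS2 x hS')
    · rintro (rfl | ⟨h, _⟩)
      · exact huC
      · exact h
  have huB : u ∉ C₂ ∩ B := fun h =>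
    hu (Finset.mem_union_left _ (Finset.mem_union_right _ (Finset.mem_inter.1 h).2))
  have hc2card : C₂.card = (C₂ ∩ B).card + 1 := by
    conv_lhs => rw [hC2B]
    rw [Finset.card_insert_of_notMem huB]
  -- get v ∈ C₂ ∩ B
  have hb2pos : 0 < (C₂ ∩ B).card := by omega
  obtain ⟨v, hv⟩ := Finset.card_pos.1 hb2pos
  obtain ⟨hvC2, hvB⟩ := Finset.mem_inter.1 hv
  have hvC1 : v ∉ C₁ := Finset.disjoint_right.1 hdisj hvC2
  -- compute neighbour counts for v
  have e1 : C₁ ∩ (A ∪ B) = A ∪ (C₁ ∩ B) := by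
    rw [Finset.inter_union_distrib_left, hAC1]
  have e2 : C₂ ∩ (A ∪ B) = C₂ ∩ B := by
    rw [Finset.inter_union_distrib_left, hAC2, Finset.empty_union]
  have h := hP2 v hvC2
  rw [nbB v hvB C₁, nbB v hvB C₂, e1, e2] at h
  have hvnot : v ∉ A ∪ (C₁ ∩ B) := by
    simp only [Finset.mem_union, Finset.mem_inter]
    push_neg
    exact ⟨Finset.disjoint_right.1 hAB hvB, fun h' => absurd h' hvC1⟩
  rw [Finset.erase_eq_of_notMem hvnot, Finset.card_erase_of_mem hv] at h
  have hcard1 : (A ∪ (C₁ ∩ B)).card = a + (C₁ ∩ B).card := by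
    rw [Finset.card_union_of_disjoint, hA]
    exact Finset.disjoint_of_subset_right (Finset.inter_subset_right) hAB
  rw [hcard1] at h
  -- counting identities
  have hBsplit : (C₁ ∩ B).card + (C₂ ∩ B).card = b := by
    rw [← Finset.card_union_of_disjoint
      (Finset.disjoint_of_subset_left Finset.inter_subset_left
        (Finset.disjoint_of_subset_right Finset.inter_subset_left hdisj)), ← hB]
    congr 1
    rw [Finset.inter_comm C₁ B, Finset.inter_comm C₂ B, ← Finset.inter_union_distrib_left,
      huniv, Finset.inter_univ]
  have hABS : Disjoint (A ∪ B) S := Finset.disjoint_union_left.2 ⟨hAS, hBS⟩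
  have hn : C₁.card + C₂.card = a + b + s + 1 := by
    rw [← Finset.card_union_of_disjoint hdisj, huniv, ← hcover,
      Finset.card_insert_of_notMem hu, Finset.card_union_of_disjoint hABS,
      Finset.card_union_of_disjoint hAB, hA, hB, hS]
  -- final arithmetic
  set b₁ := (C₁ ∩ B).card with hb1def
  set b₂ := (C₂ ∩ B).card with hb2def
  have hc1val : C₁.card = a + b₁ + s := by omega
  obtain ⟨t, ht⟩ : ∃ t, b₂ = t + 1 := ⟨b₂ - 1, by omega⟩
  rw [hc2card, hc1val, ht] at h
  simp only [Nat.add_sub_cancel] at h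
  -- h : (a + b₁) * (t + 1) ≤ t * (a + b₁ + s)
  have hbval : b = b₁ + t + 1 := by omega
  rw [hbval] at hineq
  nlinarith [h, hineq]

/-- For positive integers `a, b, s` with `b·s < a + s`, the graph `G_{a,b,s}`
(whose vertex set is `A ∪ B ∪ S ∪ {u}` with `|A| = a`, `|B| = b`, `|S| = s`, where
`A ∪ B` is a clique, `S` is an independent set, `u` is isolated, every vertex of `A` is
adjacent to every vertex of `S`, and no vertex of `B` is adjacent to a vertex of `S`)
admits no 2-community structure. -/
theorem stmt_18 {V : Type*} [Fintype V] [DecidableEq V] (G : SimpleGraph V)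
    [DecidableRel G.Adj] (a b s : ℕ) (ha : 0 < a) (hb : 0 < b) (hs : 0 < s)
    (hineq : b * s < a + s)
    (A B S : Finset V) (u : V)
    (hA : A.card = a) (hB : B.card = b) (hS : S.card = s)
    (hAB : Disjoint A B) (hAS : Disjoint A S) (hBS : Disjoint B S)
    (hu : u ∉ A ∪ B ∪ S) (hcover : insert u (A ∪ B ∪ S) = Finset.univ)
    (hadj : ∀ x y : V, G.Adj x y ↔ x ≠ y ∧
      ((x ∈ A ∪ B ∧ y ∈ A ∪ B) ∨ (x ∈ A ∧ y ∈ S) ∨ (x ∈ S ∧ y ∈ A))) :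
    ¬ ∃ C₁ C₂ : Finset V, Is2Comm G C₁ C₂ := by
  rintro ⟨C₁, C₂, hcomm⟩
  have huu : u ∈ C₁ ∪ C₂ := by
    rw [hcomm.2.2.2.1]
    exact Finset.mem_univ u
  rcases Finset.mem_union.1 huu with h | h
  · exact key G a b s ha hb hs hineq A B S u hA hB hS hAB hAS hBS hu hcover hadj
      C₂ C₁ h (is2Comm_symm G hcomm)
  · exact key G a b s ha hb hs hineq A B S u hA hB hS hAB hAS hBS hu hcover hadj
      C₁ C₂ h hcomm
end
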